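/- arXiv:2303.09934 — 7 statements merged into one kernel-verified Lean document; each statement's English description precedes it below -/
import Mathlib

section
/- Let F=(X,R,D) be a bimodal frame. Then the following are equivalent: (i) F validates the three formulas p→[≠]⟨≠⟩p, ⟨≠⟩⟨≠⟩p→∃p and ◇p→∃p, and F is generated by one of its points, i.e., there is x∈X such that every point of X can be reached from x by a finite path along the relation R∪D; (ii) ≠_X ⊆ D, where ≠_X is the inequality relation on X (the set of pairs (x,y)∈X×X with x≠y). -/
/-- Bimodal formulas: variables, ⊥, →, ◇ (along R), ⟨≠⟩ (along D). -/
inductive BForm : Type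
  | var : ℕ → BForm
  | bot : BForm
  | imp : BForm → BForm → BForm
  | dia : BForm → BForm
  | ddia : BForm → BForm
  deriving DecidableEq

namespace BForm

def neg (φ : BForm) : BForm := imp φ bot
def top : BForm := neg bot
def or (φ ψ : BForm) : BForm := imp (neg φ) ψ
def and (φ ψ : BForm) : BForm := neg (imp φ (neg ψ))
def box (φ : BForm) : BForm := neg (dia (neg φ))
def dbox (φ : BForm) : BForm := neg (ddia (neg φ))
/-- ∃φ := ⟨≠⟩φ ∨ φ -/
def Ex (φ : BForm) : BForm := or (ddia φ) φ
/-- ∀φ := [≠]φ ∧ φ -/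
def All (φ : BForm) : BForm := and (dbox φ) φ

/-- Uniform substitution. -/
def subst (σ : ℕ → BForm) : BForm → BForm
  | var p => σ p
  | bot => bot
  | imp a b => imp (subst σ a) (subst σ b)
  | dia a => dia (subst σ a)
  | ddia a => ddia (subst σ a)

/-- The set of subformulas of a formula. -/
def sub : BForm → Finset BForm
  | var p => {var p}
  | bot => {bot}
  | imp a b => insert (imp a b) (sub a ∪ sub b)
  | dia a => insert (dia a) (sub a)
  | ddia a => insert (ddia a) (sub a)

def bigOr : List BForm → BForm
  | [] => bot
  | φ :: l => or φ (bigOr l)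

def bigAnd : List BForm → BForm
  | [] => top
  | φ :: l => and φ (bigAnd l)

/-- CF_k := ∀⋁_{i<k}(p_i ∧ ⋀_{j<k, j≠i}¬p_j) → ∃⋁_{i<k}(p_i ∧ ◇p_i). -/
def CF (k : ℕ) : BForm :=
  imp
    (All (bigOr ((List.range k).map fun i =>
      and (var i) (bigAnd (((List.range k).filter (fun j => j ≠ i)).map fun j => neg (var j))))))
    (Ex (bigOr ((List.range k).map fun i => and (var i) (dia (var i)))))

/-- Con := ∃p ∧ ∃¬p → ∃(p ∧ ◇¬p). -/
def Con : BForm :=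
  imp (and (Ex (var 0)) (Ex (neg (var 0)))) (Ex (and (var 0) (dia (neg (var 0)))))

/-- p → [≠]⟨≠⟩p -/
def axB1 : BForm := imp (var 0) (dbox (ddia (var 0)))
/-- ⟨≠⟩⟨≠⟩p → ∃p -/
def axB2 : BForm := imp (ddia (ddia (var 0))) (Ex (var 0))
/-- ◇p → ∃p -/
def axB3 : BForm := imp (dia (var 0)) (Ex (var 0))
/-- p → □◇p -/
def axSymm : BForm := imp (var 0) (box (dia (var 0)))

end BForm

/-- Truth of a bimodal formula at a point of a model (X, R, D, θ). -/
def BSat {X : Type} (R D : X → X → Prop) (θ : ℕ → X → Prop) : X → BForm → Prop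
  | x, .var p => θ p x
  | _, .bot => False
  | x, .imp a b => BSat R D θ x a → BSat R D θ x b
  | x, .dia a => ∃ y, R x y ∧ BSat R D θ y a
  | x, .ddia a => ∃ y, D x y ∧ BSat R D θ y a

/-- Validity of a bimodal formula in the frame (X, R, D). -/
def BValid {X : Type} (R D : X → X → Prop) (φ : BForm) : Prop :=
  ∀ (θ : ℕ → X → Prop) (x : X), BSat R D θ x φ

/-- φ is a classical tautology (a substitution instance of a propositional tautology):
it is true under every assignment of truth values that respects ⊥ and →. -/
def IsTautology (φ : BForm) : Prop :=
  ∀ v : BForm → Prop, ¬ v .bot → (∀ a b, v (.imp a b) ↔ (v a → v b)) → v φ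

/-- Normal bimodal logics. -/
structure IsNormalBL (L : Set BForm) : Prop where
  taut : ∀ φ, IsTautology φ → φ ∈ L
  negDiaBot : BForm.neg (.dia .bot) ∈ L
  negDdiaBot : BForm.neg (.ddia .bot) ∈ L
  diaOr : BForm.imp (.dia (.or (.var 0) (.var 1))) (.or (.dia (.var 0)) (.dia (.var 1))) ∈ L
  ddiaOr : BForm.imp (.ddia (.or (.var 0) (.var 1))) (.or (.ddia (.var 0)) (.ddia (.var 1))) ∈ L
  mp : ∀ φ ψ, BForm.imp φ ψ ∈ L → φ ∈ L → ψ ∈ L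
  subst : ∀ φ σ, φ ∈ L → BForm.subst σ φ ∈ L
  monoDia : ∀ φ ψ, BForm.imp φ ψ ∈ L → BForm.imp (.dia φ) (.dia ψ) ∈ L
  monoDdia : ∀ φ ψ, BForm.imp φ ψ ∈ L → BForm.imp (.ddia φ) (.ddia ψ) ∈ L

/-- The smallest normal bimodal logic containing a given set of axioms. -/
def NormalLogicOf (Ax : Set BForm) : Set BForm :=
  ⋂₀ {L : Set BForm | IsNormalBL L ∧ Ax ⊆ L}

/-- Axioms of K_≠. -/
def KDiffAx : Set BForm := {BForm.axB1, BForm.axB2, BForm.axB3}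
/-- Axioms of KB_≠. -/
def KBDiffAx : Set BForm := insert BForm.axSymm KDiffAx

/-- A proper partition of X w.r.t. R: a family of nonempty pairwise disjoint sets
with union X, none of which contains two R-related points. -/
def IsProperPartition {X : Type} (R : X → X → Prop) (A : Set (Set X)) : Prop :=
  (∀ a ∈ A, a.Nonempty) ∧
  (∀ a ∈ A, ∀ b ∈ A, a ≠ b → a ∩ b = ∅) ∧
  ⋃₀ A = Set.univ ∧
  ∀ a ∈ A, ∀ x ∈ a, ∀ y ∈ a, ¬ R x y

/-- C(X,R) > k : there is no finite proper partition of X with at most k elements. -/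
def ChromGT {X : Type} (R : X → X → Prop) (k : ℕ) : Prop :=
  ∀ A : Finset (Set X), A.card ≤ k → ¬ IsProperPartition R (↑A : Set (Set X))

/-- (X,R) is connected: any two points are linked by a finite path of R-edges
traversed in either direction. -/
def IsConnectedRel {X : Type} (R : X → X → Prop) : Prop :=
  ∀ x y : X, ∃ (n : ℕ) (f : ℕ → X), f 0 = x ∧ f n = y ∧
    ∀ i < n, R (f i) (f (i + 1)) ∨ R (f (i + 1)) (f i)

/-- Γ is closed under subformulas. -/
def SubClosed (Γ : Finset BForm) : Prop := ∀ φ ∈ Γ, BForm.sub φ ⊆ Γ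

/-- For a bimodal frame (X,R,D): F validates p→[≠]⟨≠⟩p, ⟨≠⟩⟨≠⟩p→∃p,
◇p→∃p and is point-generated (w.r.t. R∪D) iff ≠_X ⊆ D. -/
theorem stmt0 {X : Type} [Nonempty X] (R D : X → X → Prop) :
    ((BValid R D BForm.axB1 ∧ BValid R D BForm.axB2 ∧ BValid R D BForm.axB3) ∧
      ∃ x : X, ∀ y : X, Relation.ReflTransGen (fun a b => R a b ∨ D a b) x y) ↔
    (∀ x y : X, x ≠ y → D x y) := by
  constructor
  · rintro ⟨⟨h1, h2, h3⟩, x0, hgen⟩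
    -- symmetry of D
    have hsymm : ∀ a b, D a b → D b a := by
      intro a b hab
      have := h1 (fun _ z => z = a) a
      simp only [BForm.axB1, BForm.dbox, BForm.neg, BSat] at this
      by_contra hcon
      exact this trivial ⟨b, hab, fun ⟨z, hz, hz'⟩ => hcon (hz' ▸ hz)⟩
    -- pseudo-transitivity
    have htrans : ∀ a b c, D a b → D b c → a = c ∨ D a c := by
      intro a b c hab hbc
      have := h2 (fun _ z => z = c) a
      simp only [BForm.axB2, BForm.Ex, BForm.or, BForm.neg, BSat] at this
      by_contra hcon
      push_neg at hcon
      exact hcon.1 (this ⟨b, hab, c, hbc, rfl⟩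
        (fun ⟨w, hw, hw'⟩ => hcon.2 (hw' ▸ hw)))
    -- R gives equality-or-D
    have hR : ∀ a b, R a b → a = b ∨ D a b := by
      intro a b hab
      have := h3 (fun _ z => z = b) a
      simp only [BForm.axB3, BForm.Ex, BForm.or, BForm.neg, BSat] at this
      by_contra hcon
      push_neg at hcon
      exact hcon.1 (this ⟨b, hab, rfl⟩ (fun ⟨w, hw, hw'⟩ => hcon.2 (hw' ▸ hw)))
    -- E := (· = · ∨ D) is an equivalence relation
    set E : X → X → Prop := fun a b => a = b ∨ D a b with hE
    have hEsymm : ∀ a b, E a b → E b a := by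
      rintro a b (rfl | h); exact Or.inl rfl; exact Or.inr (hsymm _ _ h)
    have hEtrans : ∀ a b c, E a b → E b c → E a c := by
      rintro a b c (rfl | h) (rfl | h')
      · exact Or.inl rfl
      · exact Or.inr h'
      · exact Or.inr h
      · exact htrans a b c h h'
    have key : ∀ y, E x0 y := by
      intro y
      have := hgen y
      induction this with
      | refl => exact Or.inl rfl
      | tail _ hstep ih =>
          rename_i b c _
          refine hEtrans _ _ _ ih ?_
          rcases hstep with h | h
          · exact hR b c h
          · exact Or.inr h
    intro x y hxy
    rcases hEtrans _ _ _ (hEsymm _ _ (key x)) (key y) with rfl | h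
    · exact absurd rfl hxy
    · exact h
  · intro hD
    refine ⟨⟨?_, ?_, ?_⟩, Classical.arbitrary X, fun y => ?_⟩
    · intro θ x
      simp only [BForm.axB1, BForm.dbox, BForm.neg, BSat]
      rintro hx ⟨y, hxy, hy⟩
      by_cases h : y = x
      · subst h; exact hy ⟨y, hxy, hx⟩
      · exact hy ⟨x, hD y x h, hx⟩
    · intro θ x
      simp only [BForm.axB2, BForm.Ex, BForm.or, BForm.neg, BSat]
      rintro ⟨y, _, z, _, hz⟩ hno
      by_cases h : z = x
      · exact h ▸ hz
      · exact absurd ⟨z, hD x z (fun e => h e.symm), hz⟩ hno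
    · intro θ x
      simp only [BForm.axB3, BForm.Ex, BForm.or, BForm.neg, BSat]
      rintro ⟨y, _, hy⟩ hno
      by_cases h : y = x
      · exact h ▸ hy
      · exact absurd ⟨y, hD x y (fun e => h e.symm), hy⟩ hno
    · by_cases h : Classical.arbitrary X = y
      · exact h ▸ Relation.ReflTransGen.refl
      · exact Relation.ReflTransGen.single (Or.inr (hD _ _ h))
end

section
/- Let k be a natural number and let F=(X,R,D) be a bimodal frame such that ≠_X ⊆ D, where ≠_X is the inequality relation on X. Then C(X,R)>k if and only if the formula CF_k is valid in F. -/
section Aux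

variable {X : Type} (R D : X → X → Prop) (θ : ℕ → X → Prop)

lemma bsat_ddia (x : X) (φ : BForm) :
    BSat R D θ x (BForm.ddia φ) ↔ ∃ y, D x y ∧ BSat R D θ y φ := Iff.rfl

lemma bsat_or (x : X) (φ ψ : BForm) :
    BSat R D θ x (BForm.or φ ψ) ↔ BSat R D θ x φ ∨ BSat R D θ x ψ := by
  simp only [BForm.or, BForm.neg, BSat]; tauto

lemma bsat_and (x : X) (φ ψ : BForm) :
    BSat R D θ x (BForm.and φ ψ) ↔ BSat R D θ x φ ∧ BSat R D θ x ψ := by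
  simp only [BForm.and, BForm.neg, BSat]; tauto

lemma bsat_bigOr (x : X) (l : List BForm) :
    BSat R D θ x (BForm.bigOr l) ↔ ∃ φ ∈ l, BSat R D θ x φ := by
  induction l with
  | nil => simp [BForm.bigOr, BSat]
  | cons φ l ih => simp [BForm.bigOr, bsat_or, ih]

lemma bsat_bigAnd (x : X) (l : List BForm) :
    BSat R D θ x (BForm.bigAnd l) ↔ ∀ φ ∈ l, BSat R D θ x φ := by
  induction l with
  | nil => simp [BForm.bigAnd, BForm.top, BForm.neg, BSat]
  | cons φ l ih => simp [BForm.bigAnd, bsat_and, ih]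

lemma bsat_dbox (x : X) (φ : BForm) :
    BSat R D θ x (BForm.dbox φ) ↔ ∀ y, D x y → BSat R D θ y φ := by
  constructor
  · intro h y hxy
    by_contra hy
    exact h ⟨y, hxy, hy⟩
  · intro h hex
    obtain ⟨y, hxy, hy⟩ := hex
    exact hy (h y hxy)

lemma bsat_Ex (hD : ∀ x y : X, x ≠ y → D x y) (x : X) (φ : BForm) :
    BSat R D θ x (BForm.Ex φ) ↔ ∃ y, BSat R D θ y φ := by
  simp only [BForm.Ex]
  rw [bsat_or, bsat_ddia]
  constructor
  · rintro (⟨y, -, hy⟩ | hy)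
    exacts [⟨y, hy⟩, ⟨x, hy⟩]
  · rintro ⟨y, hy⟩
    by_cases hxy : y = x
    · subst hxy; exact Or.inr hy
    · exact Or.inl ⟨y, hD x y (Ne.symm hxy), hy⟩

lemma bsat_All (hD : ∀ x y : X, x ≠ y → D x y) (x : X) (φ : BForm) :
    BSat R D θ x (BForm.All φ) ↔ ∀ y, BSat R D θ y φ := by
  simp only [BForm.All]
  rw [bsat_and, bsat_dbox]
  constructor
  · rintro ⟨h1, h2⟩ y
    by_cases hxy : y = x
    · subst hxy; exact h2
    · exact h1 y (hD x y (Ne.symm hxy))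
  · intro h; exact ⟨fun y _ => h y, h x⟩

lemma bsat_Phi (k : ℕ) (x : X) :
    BSat R D θ x (BForm.bigOr ((List.range k).map fun i =>
      BForm.and (BForm.var i) (BForm.bigAnd (((List.range k).filter (fun j => j ≠ i)).map
        fun j => BForm.neg (BForm.var j))))) ↔
      ∃ i < k, θ i x ∧ ∀ j < k, j ≠ i → ¬ θ j x := by
  rw [bsat_bigOr]
  constructor
  · rintro ⟨φ, hφ, h⟩
    simp only [List.mem_map, List.mem_range] at hφ
    obtain ⟨i, hi, rfl⟩ := hφ
    rw [bsat_and] at h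
    obtain ⟨h1, h2⟩ := h
    rw [bsat_bigAnd] at h2
    refine ⟨i, hi, h1, fun j hj hji hθj => ?_⟩
    have hmem : BForm.neg (BForm.var j) ∈ ((List.range k).filter (fun j => j ≠ i)).map
        (fun j => BForm.neg (BForm.var j)) := by
      simp only [List.mem_map, List.mem_filter, List.mem_range]
      exact ⟨j, ⟨hj, by simpa using hji⟩, rfl⟩
    exact h2 _ hmem hθj
  · rintro ⟨i, hi, h1, h2⟩
    refine ⟨_, List.mem_map.2 ⟨i, List.mem_range.2 hi, rfl⟩, ?_⟩
    rw [bsat_and]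
    refine ⟨h1, ?_⟩
    rw [bsat_bigAnd]
    rintro φ hφ
    simp only [List.mem_map, List.mem_filter, List.mem_range] at hφ
    obtain ⟨j, ⟨hj, hji⟩, rfl⟩ := hφ
    exact h2 j hj (by simpa using hji)

lemma bsat_Psi (k : ℕ) (x : X) :
    BSat R D θ x (BForm.bigOr ((List.range k).map fun i =>
      BForm.and (BForm.var i) (BForm.dia (BForm.var i)))) ↔
      ∃ i < k, θ i x ∧ ∃ z, R x z ∧ θ i z := by
  rw [bsat_bigOr]
  constructor
  · rintro ⟨φ, hφ, h⟩
    simp only [List.mem_map, List.mem_range] at hφ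
    obtain ⟨i, hi, rfl⟩ := hφ
    rw [bsat_and] at h
    exact ⟨i, hi, h.1, h.2⟩
  · rintro ⟨i, hi, hθi, hz⟩
    exact ⟨_, List.mem_map.2 ⟨i, List.mem_range.2 hi, rfl⟩,
      (bsat_and R D θ x _ _).2 ⟨hθi, hz⟩⟩

end Aux

/-- If ≠_X ⊆ D, then C(X,R) > k iff CF_k is valid in (X,R,D). -/
theorem stmt1 {X : Type} [Nonempty X] (R D : X → X → Prop) (k : ℕ)
    (hD : ∀ x y : X, x ≠ y → D x y) :
    ChromGT R k ↔ BValid R D (BForm.CF k) := by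
  classical
  constructor
  · -- ChromGT → valid
    intro hC θ x
    intro hAll
    rw [bsat_All R D θ hD] at hAll
    rw [bsat_Ex R D θ hD]
    by_contra hno
    push_neg at hno
    have hno' : ∀ y, ¬ ∃ i < k, θ i y ∧ ∃ z, R y z ∧ θ i z := by
      intro y h
      exact hno y ((bsat_Psi R D θ k y).2 h)
    have hex : ∀ y, ∃ i < k, θ i y ∧ ∀ j < k, j ≠ i → ¬ θ j y := by
      intro y; exact (bsat_Phi R D θ k y).1 (hAll y)
    set A : Finset (Set X) :=
      ((Finset.range k).image fun i => {y | θ i y}).filter (fun a => a.Nonempty) with hA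
    refine hC A ?_ ?_
    · calc A.card ≤ ((Finset.range k).image fun i => {y | θ i y}).card :=
            Finset.card_filter_le _ _
        _ ≤ (Finset.range k).card := Finset.card_image_le
        _ = k := Finset.card_range k
    · refine ⟨?_, ?_, ?_, ?_⟩
      · intro a ha
        simp only [hA, Finset.coe_filter, Set.mem_setOf_eq] at ha
        exact ha.2
      · intro a ha b hb hab
        simp only [hA, Finset.coe_filter, Set.mem_setOf_eq, Finset.mem_image,
          Finset.mem_range] at ha hb
        obtain ⟨⟨i, hi, rfl⟩, -⟩ := ha
        obtain ⟨⟨j, hj, rfl⟩, -⟩ := hb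
        ext y
        simp only [Set.mem_inter_iff, Set.mem_setOf_eq, Set.mem_empty_iff_false, iff_false]
        rintro ⟨hyi, hyj⟩
        obtain ⟨m, hm, hym, huniq⟩ := hex y
        have hi' : i = m := by
          by_contra h; exact huniq i hi h hyi
        have hj' : j = m := by
          by_contra h; exact huniq j hj h hyj
        exact hab (by rw [hi', hj'])
      · ext y
        simp only [Set.mem_sUnion, Set.mem_univ, iff_true]
        obtain ⟨i, hi, hyi, -⟩ := hex y
        refine ⟨{z | θ i z}, ?_, hyi⟩
        simp only [hA, Finset.coe_filter, Set.mem_setOf_eq, Finset.mem_image, Finset.mem_range]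
        exact ⟨⟨i, hi, rfl⟩, ⟨y, hyi⟩⟩
      · intro a ha y hy z hz hR
        simp only [hA, Finset.coe_filter, Set.mem_setOf_eq, Finset.mem_image,
          Finset.mem_range] at ha
        obtain ⟨⟨i, hi, rfl⟩, -⟩ := ha
        exact hno' y ⟨i, hi, hy, z, hR, hz⟩
  · -- valid → ChromGT
    intro hV A hcard ⟨hne, hdisj, huniv, hprop⟩
    set l := A.toList with hl
    have hlnd : l.Nodup := A.nodup_toList
    have hlmem : ∀ a, a ∈ l ↔ a ∈ A := fun a => A.mem_toList
    have hllen : l.length ≤ k := by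
      rw [hl, Finset.length_toList]; exact hcard
    set θ : ℕ → X → Prop := fun i x => ∃ h : i < l.length, x ∈ l.get ⟨i, h⟩ with hθ
    obtain ⟨x0⟩ := ‹Nonempty X›
    have hmain := hV θ x0
    have hhyp : ∀ y, ∃ i < k, θ i y ∧ ∀ j < k, j ≠ i → ¬ θ j y := by
      intro y
      have hyU : y ∈ ⋃₀ (↑A : Set (Set X)) := by rw [huniv]; trivial
      obtain ⟨a, haA, hya⟩ := hyU
      have haA' : a ∈ A := haA
      obtain ⟨i, rfl⟩ := List.mem_iff_get.1 ((hlmem a).2 haA')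
      refine ⟨i, lt_of_lt_of_le i.2 hllen, ⟨i.2, hya⟩, ?_⟩
      intro j hj hji hθj
      obtain ⟨hjl, hyj⟩ := hθj
      have hne' : l.get ⟨j, hjl⟩ ≠ l.get i := by
        intro h
        have : (⟨j, hjl⟩ : Fin l.length) = i := hlnd.get_inj_iff.1 h
        exact hji (by simpa using congrArg Fin.val this)
      have h1 : l.get ⟨j, hjl⟩ ∈ A := (hlmem _).1 (l.get_mem _)
      have h2 : l.get i ∈ A := (hlmem _).1 (l.get_mem _)
      have hempty := hdisj _ h1 _ h2 hne'
      have hmem : y ∈ l.get ⟨j, hjl⟩ ∩ l.get i := ⟨hyj, hya⟩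
      rw [hempty] at hmem
      exact hmem
    have hcon := hmain ((bsat_All R D θ hD x0 _).2
      (fun y => (bsat_Phi R D θ k y).2 (hhyp y)))
    obtain ⟨y, hy⟩ := (bsat_Ex R D θ hD x0 _).1 hcon
    obtain ⟨i, hi, ⟨hil, hyi⟩, z, hRz, ⟨hil', hzi⟩⟩ := (bsat_Psi R D θ k y).1 hy
    have hAmem : l.get ⟨i, hil⟩ ∈ A := (hlmem _).1 (l.get_mem _)
    exact hprop _ hAmem y hyi z hzi hRz
end

section
/- Let G be a simple graph with nonempty vertex set V and let k be a natural number. Then the chromatic number of G is greater than k if and only if the bimodal frame (V, Adj_G, ≠_V) validates the formula CF_k, where Adj_G is the adjacency relation of G and ≠_V is the inequality relation on V. -/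
section Aux

variable {X : Type} (R D : X → X → Prop) (θ : ℕ → X → Prop) (x : X)

lemma sat_neg (φ : BForm) : BSat R D θ x (BForm.neg φ) ↔ ¬ BSat R D θ x φ := Iff.rfl

lemma sat_and (φ ψ : BForm) :
    BSat R D θ x (BForm.and φ ψ) ↔ BSat R D θ x φ ∧ BSat R D θ x ψ := by
  show ¬ (BSat R D θ x φ → ¬ BSat R D θ x ψ) ↔ _
  tauto

lemma sat_or (φ ψ : BForm) :
    BSat R D θ x (BForm.or φ ψ) ↔ BSat R D θ x φ ∨ BSat R D θ x ψ := by
  show (¬ BSat R D θ x φ → BSat R D θ x ψ) ↔ _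
  tauto

lemma sat_bigOr (l : List BForm) :
    BSat R D θ x (BForm.bigOr l) ↔ ∃ φ ∈ l, BSat R D θ x φ := by
  induction l with
  | nil => simp [BForm.bigOr]; exact fun h => h
  | cons a l ih => simp [BForm.bigOr, sat_or, ih]

lemma sat_bigAnd (l : List BForm) :
    BSat R D θ x (BForm.bigAnd l) ↔ ∀ φ ∈ l, BSat R D θ x φ := by
  induction l with
  | nil => simp [BForm.bigAnd, BForm.top, sat_neg]; exact fun h => h
  | cons a l ih => simp [BForm.bigAnd, sat_and, ih]

lemma sat_Ex (φ : BForm) :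
    BSat R (fun a b : X => a ≠ b) θ x (BForm.Ex φ) ↔ ∃ y, BSat R (fun a b : X => a ≠ b) θ y φ := by
  rw [BForm.Ex, sat_or]
  show ((∃ y, x ≠ y ∧ _) ∨ _) ↔ _
  constructor
  · rintro (⟨y, _, hy⟩ | h)
    · exact ⟨y, hy⟩
    · exact ⟨x, h⟩
  · rintro ⟨y, hy⟩
    by_cases hxy : x = y
    · exact Or.inr (hxy ▸ hy)
    · exact Or.inl ⟨y, hxy, hy⟩

lemma sat_All (φ : BForm) :
    BSat R (fun a b : X => a ≠ b) θ x (BForm.All φ) ↔ ∀ y, BSat R (fun a b : X => a ≠ b) θ y φ := by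
  rw [BForm.All, sat_and]
  have hdb : BSat R (fun a b : X => a ≠ b) θ x (BForm.dbox φ) ↔
      ∀ y, x ≠ y → BSat R (fun a b : X => a ≠ b) θ y φ := by
    show ¬ (∃ y, x ≠ y ∧ ¬ _) ↔ _
    push_neg
    rfl
  rw [hdb]
  constructor
  · rintro ⟨h1, h2⟩ y
    by_cases hxy : x = y
    · exact hxy ▸ h2
    · exact h1 y hxy
  · exact fun h => ⟨fun y _ => h y, h x⟩

end Aux

/-- For a simple graph G on a nonempty vertex set V, the chromatic
number of G is greater than k (no proper coloring with at most k colors) iff the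
frame (V, Adj_G, ≠_V) validates CF_k. -/
theorem stmt2 {V : Type} [Nonempty V] (G : SimpleGraph V) (k : ℕ) :
    ¬ G.Colorable k ↔ BValid G.Adj (fun x y : V => x ≠ y) (BForm.CF k) := by
  set D : V → V → Prop := fun x y : V => x ≠ y with hD
  constructor
  · -- ¬Colorable → valid
    intro hnc θ x hant
    -- antecedent: every point has exactly one color i < k
    rw [sat_All] at hant
    have hant' : ∀ y : V, ∃ i < k, θ i y ∧ ∀ j < k, j ≠ i → ¬ θ j y := by
      intro y
      have := hant y
      rw [sat_bigOr] at this
      obtain ⟨φ, hφ, hsat⟩ := this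
      simp only [List.mem_map, List.mem_range] at hφ
      obtain ⟨i, hik, rfl⟩ := hφ
      rw [sat_and] at hsat
      refine ⟨i, hik, hsat.1, ?_⟩
      intro j hjk hji hθj
      have := (sat_bigAnd _ _ _ _ _).mp hsat.2 (BForm.neg (BForm.var j)) ?_
      · exact this hθj
      · simp only [List.mem_map, List.mem_filter, List.mem_range]
        exact ⟨j, by simp [hjk, hji]⟩
    rw [sat_Ex]
    by_contra hcon
    push_neg at hcon
    -- build coloring
    have hk : 0 < k := by
      obtain ⟨i, hik, _⟩ := hant' x
      omega
    apply hnc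
    refine ⟨SimpleGraph.Coloring.mk
      (fun y => ⟨(hant' y).choose, (hant' y).choose_spec.1⟩) ?_⟩
    intro a b hab hcab
    -- c a = c b = i, θ i a, θ i b, Adj a b
    set i := (hant' a).choose
    have hia : θ i a := (hant' a).choose_spec.2.1
    have hib : θ i b := by
      have heq : (hant' b).choose = i := (congrArg Fin.val hcab).symm
      exact heq ▸ (hant' b).choose_spec.2.1
    apply hcon a
    rw [sat_bigOr]
    refine ⟨_, List.mem_map.mpr ⟨i, List.mem_range.mpr (hant' a).choose_spec.1, rfl⟩, ?_⟩
    rw [sat_and]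
    exact ⟨hia, ⟨b, hab, hib⟩⟩
  · -- valid → ¬Colorable
    intro hval hc
    obtain ⟨c⟩ := hc
    set θ : ℕ → V → Prop := fun i y => (c y : ℕ) = i with hθ
    obtain ⟨x⟩ := ‹Nonempty V›
    have := hval θ x
    rw [BForm.CF] at this
    have hant : BSat G.Adj D θ x (BForm.All (BForm.bigOr ((List.range k).map fun i =>
        BForm.and (BForm.var i) (BForm.bigAnd (((List.range k).filter (fun j => j ≠ i)).map
          fun j => BForm.neg (BForm.var j)))))) := by
      rw [sat_All]
      intro y
      rw [sat_bigOr]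
      refine ⟨_, List.mem_map.mpr ⟨(c y : ℕ), List.mem_range.mpr (c y).isLt, rfl⟩, ?_⟩
      rw [sat_and]
      refine ⟨rfl, ?_⟩
      rw [sat_bigAnd]
      intro φ hφ
      simp only [List.mem_map, List.mem_filter, List.mem_range] at hφ
      obtain ⟨j, ⟨hjk, hji⟩, rfl⟩ := hφ
      rw [sat_neg]
      intro h
      exact absurd h.symm (by simpa using hji)
    have hcon := this hant
    rw [sat_Ex] at hcon
    obtain ⟨y, hy⟩ := hcon
    rw [sat_bigOr] at hy
    obtain ⟨φ, hφ, hsat⟩ := hy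
    simp only [List.mem_map, List.mem_range] at hφ
    obtain ⟨i, hik, rfl⟩ := hφ
    rw [sat_and] at hsat
    obtain ⟨hθy, z, hadj, hθz⟩ := hsat
    exact c.valid hadj (by simp only [hθ] at hθy hθz; exact Fin.ext (hθy.trans hθz.symm))
end

section
/- For every natural number k, the logic KB_≠ + CF_k has the exponential finite model property: every bimodal formula φ not in KB_≠ + CF_k is falsified at some point of some model on a finite bimodal frame which validates every formula of KB_≠ + CF_k and has at most 2^{|Sub(φ)|} elements, where |Sub(φ)| is the number of subformulas of φ. -/
namespace Stmt5
open BForm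

attribute [local instance] Classical.propDecidable
set_option linter.unusedSectionVars false

/-! ### Evaluation helpers for tautologies -/
section Eval
variable {v : BForm → Prop} (h0 : ¬ v .bot) (h1 : ∀ a b, v (.imp a b) ↔ (v a → v b))
include h0 h1

lemma v_neg (a : BForm) : v (neg a) ↔ ¬ v a := by
  rw [neg, h1]; exact ⟨fun h ha => h0 (h ha), fun h ha => absurd ha h⟩

lemma v_top : v top := by rw [BForm.top, v_neg h0 h1]; exact h0

lemma v_and (a b : BForm) : v (.and a b) ↔ (v a ∧ v b) := by
  rw [BForm.and, v_neg h0 h1, h1, v_neg h0 h1]; tauto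

lemma v_or (a b : BForm) : v (.or a b) ↔ (v a ∨ v b) := by
  rw [BForm.or, h1, v_neg h0 h1]; tauto

lemma v_bigAnd (l : List BForm) : v (bigAnd l) ↔ ∀ a ∈ l, v a := by
  induction l with
  | nil => simp [bigAnd, v_top h0 h1]
  | cons a l ih => simp [bigAnd, v_and h0 h1, ih]

lemma v_bigOr (l : List BForm) : v (bigOr l) ↔ ∃ a ∈ l, v a := by
  induction l with
  | nil => simp [bigOr, h0]
  | cons a l ih => simp [bigOr, v_or h0 h1, ih]

end Eval

/-! ### Consequences in a normal logic -/
section Logic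
variable {L : Set BForm} (hL : IsNormalBL L) {a b c : BForm}
include hL

lemma tmp1 (h : IsTautology (.imp a b)) (ha : a ∈ L) : b ∈ L :=
  hL.mp _ _ (hL.taut _ h) ha

lemma tmp2 (h : IsTautology (.imp a (.imp b c))) (ha : a ∈ L) (hb : b ∈ L) : c ∈ L :=
  hL.mp _ _ (tmp1 hL h ha) hb

/-- Sets of formulas consistent w.r.t. `L`. -/
def SCon (L : Set BForm) (s : Set BForm) : Prop :=
  ∀ l : List BForm, (∀ a ∈ l, a ∈ s) → BForm.neg (bigAnd l) ∉ L

/-- Maximal `L`-consistent sets. -/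
structure MCS (L : Set BForm) (w : Set BForm) : Prop where
  con : SCon L w
  max : ∀ s, SCon L s → w ⊆ s → s = w

omit hL in
lemma exists_chain_mem {c : Set (Set BForm)} (hc : IsChain (· ⊆ ·) c) (hne : c.Nonempty)
    (l : List BForm) (hl : ∀ a ∈ l, a ∈ ⋃₀ c) : ∃ t ∈ c, ∀ a ∈ l, a ∈ t := by
  induction l with
  | nil => exact ⟨hne.choose, hne.choose_spec, by simp⟩
  | cons a l ih =>
    obtain ⟨t, htc, ht⟩ := ih (fun x hx => hl x (List.mem_cons_of_mem _ hx))
    obtain ⟨s, hsc, has⟩ := hl a List.mem_cons_self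
    rcases eq_or_ne s t with rfl | hst
    · exact ⟨s, hsc, by intro x hx; rcases List.mem_cons.1 hx with rfl | hx; exacts [has, ht x hx]⟩
    rcases hc hsc htc hst with h | h
    · exact ⟨t, htc, by intro x hx; rcases List.mem_cons.1 hx with rfl | hx; exacts [h has, ht x hx]⟩
    · exact ⟨s, hsc, by intro x hx; rcases List.mem_cons.1 hx with rfl | hx; exacts [has, h (ht x hx)]⟩

lemma lindenbaum {s : Set BForm} (hs : SCon L s) : ∃ w, s ⊆ w ∧ MCS L w := by
  obtain ⟨m, hm⟩ := zorn_subset_nonempty {t : Set BForm | SCon L t}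
    (fun c hcS hc hne => ⟨⋃₀ c, fun l hl hneg => by
      obtain ⟨t, htc, ht⟩ := exists_chain_mem hc hne l hl
      exact hcS htc l ht hneg, fun t ht => Set.subset_sUnion_of_mem ht⟩) s hs
  exact ⟨m, hm.1, hm.2.1, fun t ht hwt => subset_antisymm (hm.2.2 ht hwt) hwt⟩

variable {w : Set BForm} (hw : MCS L w)
include hw

lemma mcs_nb (ha : a ∈ w) (hna : neg a ∈ w) : False := by
  refine hw.con [a, neg a] ?_ (hL.taut _ ?_)
  · intro x hx
    rcases List.mem_cons.1 hx with rfl | hx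
    · exact ha
    rcases List.mem_cons.1 hx with rfl | hx
    · exact hna
    simp at hx
  · intro v h0 h1
    rw [v_neg h0 h1, v_bigAnd h0 h1]
    intro hv
    exact (v_neg h0 h1 a).1 (hv (neg a) (by simp)) (hv a (by simp))

omit hw hL in
lemma mem_filter_ne {l : List BForm} {x a : BForm} (h : x ∈ l.filter (fun y => y ≠ a)) :
    x ∈ l ∧ x ≠ a := by simpa using List.mem_filter.1 h

lemma mcs_em (a : BForm) : a ∈ w ∨ neg a ∈ w := by
  by_contra hcon
  push_neg at hcon
  obtain ⟨ha, hna⟩ := hcon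
  have h1 : ¬ SCon L (insert a w) := fun h => ha (by
    have := hw.max _ h (Set.subset_insert _ _); rw [← this]; exact Set.mem_insert _ _)
  have h2 : ¬ SCon L (insert (neg a) w) := fun h => hna (by
    have := hw.max _ h (Set.subset_insert _ _); rw [← this]; exact Set.mem_insert _ _)
  simp only [SCon, not_forall, not_not] at h1 h2
  obtain ⟨l1, hl1, hn1⟩ := h1
  obtain ⟨l2, hl2, hn2⟩ := h2
  refine hw.con (l1.filter (fun y => y ≠ a) ++ l2.filter (fun y => y ≠ neg a)) ?_ ?_
  · intro x hx
    rcases List.mem_append.1 hx with hx | hx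
    · obtain ⟨hxl, hxa⟩ := mem_filter_ne hx
      rcases Set.mem_insert_iff.1 (hl1 x hxl) with rfl | h
      · exact absurd rfl hxa
      · exact h
    · obtain ⟨hxl, hxa⟩ := mem_filter_ne hx
      rcases Set.mem_insert_iff.1 (hl2 x hxl) with rfl | h
      · exact absurd rfl hxa
      · exact h
  · refine tmp2 hL ?_ hn1 hn2
    intro v h0 h1
    simp only [BForm.neg, h1, v_bigAnd h0 h1, List.mem_append]
    intro hv1 hv2 hv
    by_cases hva : v a
    · refine hv1 (fun x hx => ?_)
      by_cases hxa : x = a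
      · exact hxa ▸ hva
      · exact hv x (Or.inl (List.mem_filter.2 ⟨hx, by simpa using hxa⟩))
    · refine hv2 (fun x hx => ?_)
      by_cases hxa : x = neg a
      · subst hxa; rw [v_neg h0 h1]; exact hva
      · exact hv x (Or.inr (List.mem_filter.2 ⟨hx, decide_eq_true hxa⟩))

lemma mcs_thm (ha : a ∈ L) : a ∈ w := by
  rcases mcs_em hL hw a with h | h
  · exact h
  exfalso
  refine hw.con [neg a] (by simpa using h) (tmp1 hL ?_ ha)
  intro v h0 h1
  rw [h1, v_neg h0 h1, v_bigAnd h0 h1]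
  intro hva hv
  exact (v_neg h0 h1 a).1 (hv (neg a) (by simp)) hva

lemma mcs_imp (ha : a ∈ w) (hab : BForm.imp a b ∈ L) : b ∈ w := by
  rcases mcs_em hL hw b with h | h
  · exact h
  exfalso
  refine hw.con [a, neg b] ?_ (tmp1 hL ?_ hab)
  · intro x hx
    rcases List.mem_cons.1 hx with rfl | hx
    · exact ha
    rcases List.mem_cons.1 hx with rfl | hx
    · exact h
    simp at hx
  · intro v h0 h1
    rw [h1, h1, v_neg h0 h1, v_bigAnd h0 h1]
    intro hab' hv
    exact (v_neg h0 h1 b).1 (hv (neg b) (by simp)) (hab' (hv a (by simp)))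

lemma mcs_mp (hab : BForm.imp a b ∈ w) (ha : a ∈ w) : b ∈ w := by
  rcases mcs_em hL hw b with h | h
  · exact h
  exfalso
  refine hw.con [BForm.imp a b, a, neg b] ?_ (hL.taut _ ?_)
  · intro x hx
    rcases List.mem_cons.1 hx with rfl | hx
    · exact hab
    rcases List.mem_cons.1 hx with rfl | hx
    · exact ha
    rcases List.mem_cons.1 hx with rfl | hx
    · exact h
    simp at hx
  · intro v h0 h1
    rw [v_neg h0 h1, v_bigAnd h0 h1]
    intro hv
    have h1' := hv _ (show BForm.imp a b ∈ _ by simp)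
    rw [h1] at h1'
    exact (v_neg h0 h1 b).1 (hv (neg b) (by simp)) (h1' (hv a (by simp)))

lemma mcs_bot : BForm.bot ∉ w := by
  intro h
  refine hw.con [BForm.bot] (by simpa using h) (hL.taut _ ?_)
  intro v h0 h1
  rw [v_neg h0 h1, v_bigAnd h0 h1]
  intro hv
  exact h0 (hv _ (by simp))

lemma mcs_neg : neg a ∈ w ↔ a ∉ w := by
  constructor
  · intro h ha; exact mcs_nb hL hw ha h
  · intro h; rcases mcs_em hL hw a with h' | h'
    · exact absurd h' h
    · exact h'

lemma mcs_imp_iff : BForm.imp a b ∈ w ↔ (a ∈ w → b ∈ w) := by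
  constructor
  · exact fun h ha => mcs_mp hL hw h ha
  · intro h
    by_cases ha : a ∈ w
    · refine mcs_imp hL hw (h ha) (hL.taut _ ?_)
      intro v h0 h1; rw [h1, h1]; exact fun hb _ => hb
    · refine mcs_imp hL hw ((mcs_neg hL hw).2 ha) (hL.taut _ ?_)
      intro v h0 h1
      rw [h1, h1, v_neg h0 h1]
      exact fun hna hva => absurd hva hna

lemma mcs_and : BForm.and a b ∈ w ↔ (a ∈ w ∧ b ∈ w) := by
  constructor
  · intro h
    constructor
    · refine mcs_imp hL hw h (hL.taut _ ?_)
      intro v h0 h1; rw [h1, v_and h0 h1]; tauto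
    · refine mcs_imp hL hw h (hL.taut _ ?_)
      intro v h0 h1; rw [h1, v_and h0 h1]; tauto
  · rintro ⟨ha, hb⟩
    refine mcs_mp hL hw (mcs_imp hL hw ha (hL.taut _ ?_)) hb
    intro v h0 h1; rw [h1, h1, v_and h0 h1]; tauto

lemma mcs_or : BForm.or a b ∈ w ↔ (a ∈ w ∨ b ∈ w) := by
  constructor
  · intro h
    by_cases ha : a ∈ w
    · exact Or.inl ha
    · exact Or.inr (mcs_mp hL hw h ((mcs_neg hL hw).2 ha))
  · intro h
    rcases h with h | h
    · refine mcs_imp hL hw h (hL.taut _ ?_)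
      intro v h0 h1; rw [h1, v_or h0 h1]; tauto
    · refine mcs_imp hL hw h (hL.taut _ ?_)
      intro v h0 h1; rw [h1, v_or h0 h1]; tauto

lemma mcs_top : BForm.top ∈ w := mcs_thm hL hw (hL.taut _ (fun v h0 h1 => v_top h0 h1))

lemma mcs_bigAnd {l : List BForm} : bigAnd l ∈ w ↔ ∀ a ∈ l, a ∈ w := by
  induction l with
  | nil => simpa [bigAnd] using mcs_top hL hw
  | cons a l ih => simp [bigAnd, mcs_and hL hw, ih]

lemma mcs_bigOr {l : List BForm} : bigOr l ∈ w ↔ ∃ a ∈ l, a ∈ w := by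
  induction l with
  | nil => simp [bigOr, mcs_bot hL hw]
  | cons a l ih => simp [bigOr, mcs_or hL hw, ih]

omit hw in
lemma compose_L (h1 : BForm.imp a b ∈ L) (h2 : BForm.imp b c ∈ L) : BForm.imp a c ∈ L := by
  refine tmp2 hL ?_ h1 h2
  intro v h0 hv1; simp only [hv1]; tauto

omit hw in
lemma contrapose_L (h : BForm.imp a b ∈ L) : BForm.imp (neg b) (neg a) ∈ L := by
  refine tmp1 hL ?_ h
  intro v h0 hv1; simp only [BForm.neg, hv1]; tauto

end Logic

/-! ### Generic modal reasoning -/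
section Modal
variable {L : Set BForm} (hL : IsNormalBL L) {M : BForm → BForm}
  (hM : ∀ a b : BForm, BForm.imp a b ∈ L → BForm.imp (M a) (M b) ∈ L)
  (hMbot : BForm.neg (M .bot) ∈ L)
  (hMor : ∀ a b : BForm, BForm.imp (M (.or a b)) (.or (M a) (M b)) ∈ L)
  {a b c : BForm} {w u : Set BForm}
include hL hM hMbot hMor

omit hMor in
/-- Necessitation. -/
lemma Lnec (hc : c ∈ L) : neg (M (neg c)) ∈ L := by
  have h1 : BForm.imp (neg c) .bot ∈ L := by
    refine tmp1 hL ?_ hc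
    intro v h0 hv1; simp only [BForm.neg, hv1]; tauto
  have h2 := hM _ _ h1
  exact tmp2 hL (by intro v h0 hv1; simp only [BForm.neg, hv1]; tauto) h2 hMbot

omit hMbot in
/-- The K-style distribution written with diamonds. -/
lemma KM :
    BForm.imp (neg (M (neg (BForm.imp b c)))) (BForm.imp (neg (M (neg b))) (neg (M (neg c)))) ∈ L := by
  have h1 : BForm.imp (neg c) (BForm.or (neg (BForm.imp b c)) (neg b)) ∈ L := by
    refine hL.taut _ ?_
    intro v h0 hv1; simp only [BForm.or, BForm.neg, hv1]; tauto
  have h2 := compose_L hL (hM _ _ h1) (hMor _ _)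
  refine tmp1 hL ?_ h2
  intro v h0 hv1; simp only [BForm.or, BForm.neg, hv1]; tauto

lemma boxlist (hw : MCS L w) {l : List BForm} (hl : ∀ b ∈ l, neg (M (neg b)) ∈ w)
    (hc : BForm.imp (bigAnd l) c ∈ L) : neg (M (neg c)) ∈ w := by
  induction l generalizing c with
  | nil =>
    have : c ∈ L := hL.mp _ _ hc (hL.taut _ (fun v h0 h1 => v_top h0 h1))
    exact mcs_thm hL hw (Lnec hL hM hMbot this)
  | cons b l ih =>
    have hc' : BForm.imp (bigAnd l) (BForm.imp b c) ∈ L := by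
      refine tmp1 hL ?_ hc
      intro v h0 hv1
      simp only [bigAnd, v_and h0 hv1, hv1]; tauto
    have hbox := ih (fun x hx => hl x (List.mem_cons_of_mem _ hx)) hc'
    have hk := KM hL hM hMor (b := b) (c := c)
    exact mcs_mp hL hw (mcs_mp hL hw (mcs_thm hL hw hk) hbox) (hl b List.mem_cons_self)

lemma exists_M (hw : MCS L w) (ha : M a ∈ w) :
    ∃ u, MCS L u ∧ (∀ b, neg (M (neg b)) ∈ w → b ∈ u) ∧ a ∈ u := by
  have hcon : SCon L ({a} ∪ {b | neg (M (neg b)) ∈ w}) := by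
    intro l hl hneg
    have hl' : ∀ x ∈ l.filter (fun y => y ≠ a), neg (M (neg x)) ∈ w := by
      intro x hx
      obtain ⟨hxl, hxa⟩ := mem_filter_ne hx
      rcases hl x hxl with h | h
      · exact absurd h hxa
      · exact h
    have himp : BForm.imp (bigAnd (l.filter (fun y => y ≠ a))) (neg a) ∈ L := by
      refine tmp1 hL ?_ hneg
      intro v h0 hv1
      simp only [BForm.neg, hv1, v_bigAnd h0 hv1]
      intro hnl hl' hva
      refine hnl (fun x hx => ?_)
      by_cases hxa : x = a
      · exact hxa ▸ hva
      · exact hl' x (List.mem_filter.2 ⟨hx, by simpa using hxa⟩)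
    have hbox := boxlist hL hM hMbot hMor hw hl' himp
    have hMa' : M (neg (neg a)) ∈ w := by
      refine mcs_imp hL hw ha (hM _ _ ?_)
      exact hL.taut _ (fun v h0 hv1 => by simp only [BForm.neg, hv1]; tauto)
    exact mcs_nb hL hw hMa' hbox
  obtain ⟨u, hsu, hu⟩ := lindenbaum hL hcon
  refine ⟨u, hu, fun b hb => hsu (Or.inr hb), hsu (Or.inl rfl)⟩

omit hMbot hMor in
lemma back_M (hw : MCS L w) (hu : MCS L u) (hR : ∀ b, neg (M (neg b)) ∈ w → b ∈ u)
    (ha : a ∈ u) : M a ∈ w := by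
  rcases mcs_em hL hw (M a) with h | h
  · exact h
  exfalso
  have h2 : neg (M (neg (neg a))) ∈ w := by
    refine mcs_imp hL hw h ?_
    refine contrapose_L hL (hM _ _ ?_)
    exact hL.taut _ (fun v h0 hv1 => by simp only [BForm.neg, hv1]; tauto)
  exact mcs_nb hL hu ha (hR _ h2)

end Modal

/-! ### The canonical model -/
section Canon
variable {L : Set BForm} (hL : IsNormalBL L)
  (hB1 : BForm.axB1 ∈ L) (hB2 : BForm.axB2 ∈ L) (hB3 : BForm.axB3 ∈ L)
  (hSym : BForm.axSymm ∈ L)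
  {a b c : BForm} {w u v : Set BForm}
include hL

/-- Canonical relation for ◇. -/
def Rc (w u : Set BForm) : Prop := ∀ b, neg (dia (neg b)) ∈ w → b ∈ u
/-- Canonical relation for ⟨≠⟩. -/
def Dc (w u : Set BForm) : Prop := ∀ b, neg (ddia (neg b)) ∈ w → b ∈ u

lemma dia_or_L (a b : BForm) : BForm.imp (dia (.or a b)) (.or (dia a) (dia b)) ∈ L := by
  have := hL.subst _ (fun n => if n = 0 then a else b) hL.diaOr
  simpa [BForm.subst, BForm.or, BForm.neg] using this

lemma ddia_or_L (a b : BForm) : BForm.imp (ddia (.or a b)) (.or (ddia a) (ddia b)) ∈ L := by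
  have := hL.subst _ (fun n => if n = 0 then a else b) hL.ddiaOr
  simpa [BForm.subst, BForm.or, BForm.neg] using this

include hB1 in
lemma instB1 (a : BForm) : BForm.imp a (dbox (ddia a)) ∈ L := by
  have := hL.subst _ (fun _ => a) hB1
  simpa [BForm.axB1, BForm.subst, BForm.dbox, BForm.neg] using this

include hB2 in
lemma instB2 (a : BForm) : BForm.imp (ddia (ddia a)) (.or (ddia a) a) ∈ L := by
  have := hL.subst _ (fun _ => a) hB2
  simpa [BForm.axB2, BForm.subst, BForm.Ex, BForm.or, BForm.neg] using this

include hB3 in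
lemma instB3 (a : BForm) : BForm.imp (dia a) (.or (ddia a) a) ∈ L := by
  have := hL.subst _ (fun _ => a) hB3
  simpa [BForm.axB3, BForm.subst, BForm.Ex, BForm.or, BForm.neg] using this

include hSym in
lemma instSym (a : BForm) : BForm.imp a (box (dia a)) ∈ L := by
  have := hL.subst _ (fun _ => a) hSym
  simpa [BForm.axSymm, BForm.subst, BForm.box, BForm.neg] using this

include hB1 in
lemma Dc_sym (hw : MCS L w) (hu : MCS L u) (h : Dc w u) : Dc u w := by
  intro b hb
  by_contra hbw
  have hnb : neg b ∈ w := (mcs_neg hL hw).2 hbw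
  have h1 : dbox (ddia (neg b)) ∈ w := mcs_imp hL hw hnb (instB1 hL hB1 (neg b))
  have h2 : ddia (neg b) ∈ u := h _ h1
  exact mcs_nb hL hu h2 hb

include hSym in
lemma Rc_sym (hw : MCS L w) (hu : MCS L u) (h : Rc w u) : Rc u w := by
  intro b hb
  by_contra hbw
  have hnb : neg b ∈ w := (mcs_neg hL hw).2 hbw
  have h1 : box (dia (neg b)) ∈ w := mcs_imp hL hw hnb (instSym hL hSym (neg b))
  have h2 : dia (neg b) ∈ u := h _ h1
  exact mcs_nb hL hu h2 hb

omit hL in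
lemma mcs_exists_diff (hw : MCS L w) (hv : MCS L v) (hne : w ≠ v) : ∃ e, e ∈ v ∧ e ∉ w := by
  by_contra hcon
  push_neg at hcon
  exact hne (hv.max w hw.con hcon)

include hB2 in
lemma Dc_ptrans (hw : MCS L w) (hu : MCS L u) (hv : MCS L v)
    (h1 : Dc w u) (h2 : Dc u v) : Dc w v ∨ w = v := by
  by_contra hcon
  push_neg at hcon
  obtain ⟨hnd, hne⟩ := hcon
  simp only [Dc, not_forall] at hnd
  obtain ⟨b, hb, hbv⟩ := hnd
  obtain ⟨e, hev, hew⟩ := mcs_exists_diff hw hv hne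
  have hcv : BForm.and (neg b) e ∈ v := (mcs_and hL hv).2 ⟨(mcs_neg hL hv).2 hbv, hev⟩
  have h3 : ddia (BForm.and (neg b) e) ∈ u := back_M hL hL.monoDdia hu hv h2 hcv
  have h4 : ddia (ddia (BForm.and (neg b) e)) ∈ w := back_M hL hL.monoDdia hw hu h1 h3
  have h5 : BForm.or (ddia (BForm.and (neg b) e)) (BForm.and (neg b) e) ∈ w :=
    mcs_imp hL hw h4 (instB2 hL hB2 _)
  have htc : BForm.imp (BForm.and (neg b) e) (neg b) ∈ L :=
    hL.taut _ (fun v' h0 hv1 => by simp only [v_and h0 hv1, hv1]; tauto)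
  have hte : BForm.imp (BForm.and (neg b) e) e ∈ L :=
    hL.taut _ (fun v' h0 hv1 => by simp only [v_and h0 hv1, hv1]; tauto)
  rcases (mcs_or hL hw).1 h5 with h | h
  · have h6 : ddia (neg b) ∈ w := mcs_imp hL hw h (hL.monoDdia _ _ htc)
    exact mcs_nb hL hw h6 hb
  · exact hew (mcs_imp hL hw h hte)

include hB3 in
lemma Rc_sub (hw : MCS L w) (hu : MCS L u) (h : Rc w u) : Dc w u ∨ w = u := by
  by_contra hcon
  push_neg at hcon
  obtain ⟨hnd, hne⟩ := hcon
  simp only [Dc, not_forall] at hnd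
  obtain ⟨b, hb, hbv⟩ := hnd
  obtain ⟨e, hev, hew⟩ := mcs_exists_diff hw hu hne
  have hcv : BForm.and (neg b) e ∈ u := (mcs_and hL hu).2 ⟨(mcs_neg hL hu).2 hbv, hev⟩
  have h3 : dia (BForm.and (neg b) e) ∈ w := back_M hL hL.monoDia hw hu h hcv
  have h5 : BForm.or (ddia (BForm.and (neg b) e)) (BForm.and (neg b) e) ∈ w :=
    mcs_imp hL hw h3 (instB3 hL hB3 _)
  have htc : BForm.imp (BForm.and (neg b) e) (neg b) ∈ L :=
    hL.taut _ (fun v' h0 hv1 => by simp only [v_and h0 hv1, hv1]; tauto)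
  have hte : BForm.imp (BForm.and (neg b) e) e ∈ L :=
    hL.taut _ (fun v' h0 hv1 => by simp only [v_and h0 hv1, hv1]; tauto)
  rcases (mcs_or hL hw).1 h5 with h' | h'
  · have h6 : ddia (neg b) ∈ w := mcs_imp hL hw h' (hL.monoDdia _ _ htc)
    exact mcs_nb hL hw h6 hb
  · exact hew (mcs_imp hL hw h' hte)

end Canon

/-! ### Subformulas -/

lemma mem_sub_self (ψ : BForm) : ψ ∈ sub ψ := by cases ψ <;> simp [sub]

lemma sub_sub : ∀ (ψ : BForm), ∀ χ ∈ sub ψ, sub χ ⊆ sub ψ := by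
  intro ψ
  induction ψ with
  | var p => intro χ hχ; simp only [sub, Finset.mem_singleton] at hχ; subst hχ; simp [sub]
  | bot => intro χ hχ; simp only [sub, Finset.mem_singleton] at hχ; subst hχ; simp [sub]
  | imp a b iha ihb =>
    intro χ hχ
    simp only [sub, Finset.mem_insert, Finset.mem_union] at hχ
    rcases hχ with rfl | h | h
    · exact Finset.Subset.refl _
    · exact (iha χ h).trans (fun x hx => by simp only [sub, Finset.mem_insert, Finset.mem_union]; tauto)
    · exact (ihb χ h).trans (fun x hx => by simp only [sub, Finset.mem_insert, Finset.mem_union]; tauto)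
  | dia a iha =>
    intro χ hχ
    simp only [sub, Finset.mem_insert] at hχ
    rcases hχ with rfl | h
    · exact Finset.Subset.refl _
    · exact (iha χ h).trans (fun x hx => by simp only [sub, Finset.mem_insert]; tauto)
  | ddia a iha =>
    intro χ hχ
    simp only [sub, Finset.mem_insert] at hχ
    rcases hχ with rfl | h
    · exact Finset.Subset.refl _
    · exact (iha χ h).trans (fun x hx => by simp only [sub, Finset.mem_insert]; tauto)

/-! ### Semantic lemmas -/
section Sem
variable {X : Type} {R D : X → X → Prop} {θ : ℕ → X → Prop} {x : X} {a b : BForm}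

lemma bsat_bot : BSat R D θ x .bot ↔ False := Iff.rfl
lemma bsat_imp : BSat R D θ x (.imp a b) ↔ (BSat R D θ x a → BSat R D θ x b) := Iff.rfl
lemma bsat_neg : BSat R D θ x (neg a) ↔ ¬ BSat R D θ x a := Iff.rfl
lemma bsat_top : BSat R D θ x top := fun h => h
lemma bsat_and : BSat R D θ x (.and a b) ↔ (BSat R D θ x a ∧ BSat R D θ x b) := by
  rw [BForm.and, bsat_neg, bsat_imp, bsat_neg]; tauto
lemma bsat_or : BSat R D θ x (.or a b) ↔ (BSat R D θ x a ∨ BSat R D θ x b) := by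
  rw [BForm.or, bsat_imp, bsat_neg]; tauto
lemma bsat_dia : BSat R D θ x (dia a) ↔ ∃ y, R x y ∧ BSat R D θ y a := Iff.rfl
lemma bsat_ddia : BSat R D θ x (ddia a) ↔ ∃ y, D x y ∧ BSat R D θ y a := Iff.rfl
lemma bsat_box : BSat R D θ x (box a) ↔ ∀ y, R x y → BSat R D θ y a := by
  rw [BForm.box, bsat_neg, bsat_dia]
  push_neg
  constructor
  · intro h y hy; by_contra hn; exact (h y hy) hn
  · intro h y hy; rw [bsat_neg]; exact fun hn => hn (h y hy)
lemma bsat_dbox : BSat R D θ x (dbox a) ↔ ∀ y, D x y → BSat R D θ y a := by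
  rw [BForm.dbox, bsat_neg, bsat_ddia]
  push_neg
  constructor
  · intro h y hy; by_contra hn; exact (h y hy) hn
  · intro h y hy; rw [bsat_neg]; exact fun hn => hn (h y hy)
lemma bsat_Ex : BSat R D θ x (Ex a) ↔ (∃ y, D x y ∧ BSat R D θ y a) ∨ BSat R D θ x a := by
  rw [BForm.Ex, bsat_or, bsat_ddia]
lemma bsat_All : BSat R D θ x (All a) ↔ (∀ y, D x y → BSat R D θ y a) ∧ BSat R D θ x a := by
  rw [BForm.All, bsat_and, bsat_dbox]
lemma bsat_bigOr {l : List BForm} : BSat R D θ x (bigOr l) ↔ ∃ a ∈ l, BSat R D θ x a := by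
  induction l with
  | nil => simp [bigOr, bsat_bot]
  | cons a l ih => simp [bigOr, bsat_or, ih]
lemma bsat_bigAnd {l : List BForm} : BSat R D θ x (bigAnd l) ↔ ∀ a ∈ l, BSat R D θ x a := by
  induction l with
  | nil => simp [bigAnd, bsat_top]
  | cons a l ih => simp [bigAnd, bsat_and, ih]

lemma bsat_subst {σ : ℕ → BForm} : ∀ (ψ : BForm) (x : X),
    BSat R D θ x (subst σ ψ) ↔ BSat R D (fun p y => BSat R D θ y (σ p)) x ψ := by
  intro ψ
  induction ψ with
  | var p => intro x; exact Iff.rfl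
  | bot => intro x; exact Iff.rfl
  | imp a b iha ihb => intro x; rw [subst, bsat_imp, bsat_imp, iha, ihb]
  | dia a iha =>
    intro x; rw [subst, bsat_dia, bsat_dia]
    exact exists_congr (fun y => and_congr_right (fun _ => iha y))
  | ddia a iha =>
    intro x; rw [subst, bsat_ddia, bsat_ddia]
    exact exists_congr (fun y => and_congr_right (fun _ => iha y))

lemma isNormal_valid (R D : X → X → Prop) : IsNormalBL {ψ | BValid R D ψ} := by
  constructor
  · intro ψ h θ x
    exact h (BSat R D θ x) (fun hf => hf) (fun a b => Iff.rfl)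
  · rintro θ x ⟨y, _, hy⟩; exact hy
  · rintro θ x ⟨y, _, hy⟩; exact hy
  · intro θ x hx
    rw [bsat_dia] at hx
    obtain ⟨y, hxy, hy⟩ := hx
    rw [bsat_or] at hy ⊢
    rw [bsat_dia, bsat_dia]
    rcases hy with hy | hy
    · exact Or.inl ⟨y, hxy, hy⟩
    · exact Or.inr ⟨y, hxy, hy⟩
  · intro θ x hx
    rw [bsat_ddia] at hx
    obtain ⟨y, hxy, hy⟩ := hx
    rw [bsat_or] at hy ⊢
    rw [bsat_ddia, bsat_ddia]
    rcases hy with hy | hy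
    · exact Or.inl ⟨y, hxy, hy⟩
    · exact Or.inr ⟨y, hxy, hy⟩
  · intro φ ψ h1 h2 θ x; exact (h1 θ x) (h2 θ x)
  · intro φ σ h θ x
    rw [bsat_subst]
    exact h _ x
  · intro φ ψ h θ x
    rintro ⟨y, hxy, hy⟩
    exact ⟨y, hxy, h θ y hy⟩
  · intro φ ψ h θ x
    rintro ⟨y, hxy, hy⟩
    exact ⟨y, hxy, h θ y hy⟩

end Sem

/-! ### Substitution computation -/

lemma subst_bigAnd (σ : ℕ → BForm) (l : List BForm) :
    subst σ (bigAnd l) = bigAnd (l.map (subst σ)) := by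
  induction l with
  | nil => rfl
  | cons a l ih => simp only [bigAnd, List.map_cons, BForm.and, BForm.neg, subst, ih]

lemma subst_bigOr (σ : ℕ → BForm) (l : List BForm) :
    subst σ (bigOr l) = bigOr (l.map (subst σ)) := by
  induction l with
  | nil => rfl
  | cons a l ih => simp only [bigOr, List.map_cons, BForm.or, BForm.neg, subst, ih]

lemma subst_CF (σ : ℕ → BForm) (k : ℕ) :
    subst σ (CF k) = .imp
      (All (bigOr ((List.range k).map fun i =>
        .and (σ i) (bigAnd (((List.range k).filter (fun j => j ≠ i)).map fun j => neg (σ j))))))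
      (Ex (bigOr ((List.range k).map fun i => .and (σ i) (dia (σ i))))) := by
  simp only [CF, BForm.All, BForm.Ex, BForm.and, BForm.or, BForm.dbox, BForm.neg, subst,
    subst_bigAnd, subst_bigOr, List.map_map, Function.comp_def]

/-! ### Types over Γ -/

/-- The Γ-type of a set of formulas. -/
noncomputable def typeOf (Γ : Finset BForm) (w : Set BForm) : Finset BForm := Γ.filter (fun a => a ∈ w)

lemma typeOf_mem {Γ : Finset BForm} {w : Set BForm} {a : BForm} :
    a ∈ typeOf Γ w ↔ a ∈ Γ ∧ a ∈ w := Finset.mem_filter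

/-- The characteristic formula of a subset T of Γ. -/
noncomputable def chi (Γ T : Finset BForm) : BForm :=
  bigAnd (Γ.toList.map (fun a => if a ∈ T then a else neg a))

lemma chi_mem {L : Set BForm} (hL : IsNormalBL L) {Γ T : Finset BForm} {u : Set BForm}
    (hu : MCS L u) (hT : T ⊆ Γ) : chi Γ T ∈ u ↔ typeOf Γ u = T := by
  rw [chi, mcs_bigAnd hL hu]
  have hiff : (∀ b ∈ Γ.toList.map (fun a => if a ∈ T then a else neg a), b ∈ u) ↔
      ∀ a ∈ Γ, (if a ∈ T then a else neg a) ∈ u := by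
    simp only [List.mem_map, Finset.mem_toList]
    constructor
    · intro h a ha; exact h _ ⟨a, ha, rfl⟩
    · rintro h b ⟨a, ha, rfl⟩; exact h a ha
  rw [hiff]
  constructor
  · intro h
    apply Finset.ext
    intro x
    rw [typeOf_mem]
    constructor
    · rintro ⟨hxΓ, hxu⟩
      by_contra hxT
      have := h x hxΓ
      rw [if_neg hxT] at this
      exact mcs_nb hL hu hxu this
    · intro hxT
      refine ⟨hT hxT, ?_⟩
      have := h x (hT hxT)
      rwa [if_pos hxT] at this
  · intro hEq a haΓ
    by_cases haT : a ∈ T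
    · rw [if_pos haT]
      have : a ∈ typeOf Γ u := hEq ▸ haT
      exact (typeOf_mem.1 this).2
    · rw [if_neg haT]
      refine (mcs_neg hL hu).2 (fun hau => haT ?_)
      have : a ∈ typeOf Γ u := typeOf_mem.2 ⟨haΓ, hau⟩
      rwa [hEq] at this

/-! ### The finite filtration -/

/-- The ∃-class of w₀ in the canonical model. -/
def Cset (L : Set BForm) (w₀ : Set BForm) : Set (Set BForm) :=
  {w | MCS L w ∧ (w = w₀ ∨ Dc w₀ w)}

/-- The finite carrier: realized Γ-types. -/
noncomputable def Xfin (L : Set BForm) (Γ : Finset BForm) (w₀ : Set BForm) :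
    Finset (Finset BForm) :=
  Γ.powerset.filter (fun S => ∃ w ∈ Cset L w₀, typeOf Γ w = S)

def Rfin (L : Set BForm) (Γ : Finset BForm) (w₀ : Set BForm) (S T : Finset BForm) : Prop :=
  ∃ w ∈ Cset L w₀, ∃ u ∈ Cset L w₀, Rc w u ∧ typeOf Γ w = S ∧ typeOf Γ u = T

def Dfin (L : Set BForm) (Γ : Finset BForm) (w₀ : Set BForm) (S T : Finset BForm) : Prop :=
  ∃ w ∈ Cset L w₀, ∃ u ∈ Cset L w₀, Dc w u ∧ typeOf Γ w = S ∧ typeOf Γ u = T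

/-! ### Normal logic generated by axioms -/

lemma isNormal_NormalLogicOf (Ax : Set BForm) : IsNormalBL (NormalLogicOf Ax) := by
  constructor
  case taut =>
    intro ψ hψ
    exact Set.mem_sInter.2 (fun M hM => hM.1.taut ψ hψ)
  case negDiaBot => exact Set.mem_sInter.2 (fun M hM => hM.1.negDiaBot)
  case negDdiaBot => exact Set.mem_sInter.2 (fun M hM => hM.1.negDdiaBot)
  case diaOr => exact Set.mem_sInter.2 (fun M hM => hM.1.diaOr)
  case ddiaOr => exact Set.mem_sInter.2 (fun M hM => hM.1.ddiaOr)
  case mp =>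
    intro φ ψ h1 h2
    exact Set.mem_sInter.2 (fun M hM => hM.1.mp φ ψ (Set.mem_sInter.1 h1 M hM) (Set.mem_sInter.1 h2 M hM))
  case subst =>
    intro φ σ h1
    exact Set.mem_sInter.2 (fun M hM => hM.1.subst φ σ (Set.mem_sInter.1 h1 M hM))
  case monoDia =>
    intro φ ψ h1
    exact Set.mem_sInter.2 (fun M hM => hM.1.monoDia φ ψ (Set.mem_sInter.1 h1 M hM))
  case monoDdia =>
    intro φ ψ h1
    exact Set.mem_sInter.2 (fun M hM => hM.1.monoDdia φ ψ (Set.mem_sInter.1 h1 M hM))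

lemma subset_NormalLogicOf (Ax : Set BForm) : Ax ⊆ NormalLogicOf Ax :=
  fun a ha => Set.mem_sInter.2 (fun _ hM => hM.2 ha)

lemma NormalLogicOf_le {Ax M : Set BForm} (hM : IsNormalBL M) (hAx : Ax ⊆ M) :
    NormalLogicOf Ax ⊆ M :=
  fun _ hx => Set.mem_sInter.1 hx M ⟨hM, hAx⟩

theorem main (k : ℕ) (φ : BForm)
    (h : φ ∉ NormalLogicOf (KBDiffAx ∪ {BForm.CF k})) :
    ∃ (X : Type) (_ : Fintype X) (_ : Nonempty X)
      (R D : X → X → Prop) (θ : ℕ → X → Prop) (x : X),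
      Fintype.card X ≤ 2 ^ (BForm.sub φ).card ∧
      (∀ ψ ∈ NormalLogicOf (KBDiffAx ∪ {BForm.CF k}), BValid R D ψ) ∧
      ¬ BSat R D θ x φ := by
  classical
  set L := NormalLogicOf (KBDiffAx ∪ {BForm.CF k}) with hLdef
  have hL : IsNormalBL L := isNormal_NormalLogicOf _
  have hAxL := subset_NormalLogicOf (KBDiffAx ∪ {BForm.CF k})
  have hB1 : BForm.axB1 ∈ L := hAxL (by simp [KBDiffAx, KDiffAx])
  have hB2 : BForm.axB2 ∈ L := hAxL (by simp [KBDiffAx, KDiffAx])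
  have hB3 : BForm.axB3 ∈ L := hAxL (by simp [KBDiffAx, KDiffAx])
  have hSym : BForm.axSymm ∈ L := hAxL (by simp [KBDiffAx, KDiffAx])
  have hCF : BForm.CF k ∈ L := hAxL (by simp)
  -- a maximal consistent set refuting φ
  have hcon : SCon L {neg φ} := by
    intro l hl hneg
    apply h
    refine tmp1 hL ?_ hneg
    intro v h0 h1
    rw [BForm.neg, h1, h1, v_bigAnd h0 h1]
    intro hv
    by_contra hφ
    refine h0 (hv (fun x hx => ?_))
    have hx' := hl x hx
    rw [Set.mem_singleton_iff] at hx'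
    subst hx'
    rw [v_neg h0 h1]
    exact hφ
  obtain ⟨w₀, hsub₀, hw₀⟩ := lindenbaum hL hcon
  have hnφ : neg φ ∈ w₀ := hsub₀ rfl
  have hφw₀ : φ ∉ w₀ := fun h' => mcs_nb hL hw₀ h' hnφ
  set Γ := BForm.sub φ with hΓdef
  have hΓ : ∀ ψ ∈ Γ, BForm.sub ψ ⊆ Γ := sub_sub φ
  set C := Cset L w₀ with hCdef
  have hC₀ : w₀ ∈ C := ⟨hw₀, Or.inl rfl⟩
  have hCmcs : ∀ w ∈ C, MCS L w := fun w hw => hw.1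
  have hCD : ∀ w ∈ C, ∀ u, MCS L u → Dc w u → u ∈ C := by
    rintro w ⟨hw, hw'⟩ u hu hD
    refine ⟨hu, ?_⟩
    rcases hw' with rfl | hD0
    · exact Or.inr hD
    · rcases Dc_ptrans hL hB2 hw₀ hw hu hD0 hD with h' | h'
      · exact Or.inr h'
      · exact Or.inl h'.symm
  have hCR : ∀ w ∈ C, ∀ u, MCS L u → Rc w u → u ∈ C := by
    intro w hwC u hu hR
    rcases Rc_sub hL hB3 (hCmcs w hwC) hu hR with hD | rfl
    · exact hCD w hwC u hu hD
    · exact hwC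
  have hCdiff : ∀ w ∈ C, ∀ u ∈ C, w ≠ u → Dc w u := by
    rintro w ⟨hw, hw'⟩ u ⟨hu, hu'⟩ hne
    rcases hw' with rfl | hDw
    · rcases hu' with rfl | hDu
      · exact absurd rfl hne
      · exact hDu
    · rcases hu' with rfl | hDu
      · exact Dc_sym hL hB1 hw₀ hw hDw
      · rcases Dc_ptrans hL hB2 hw hw₀ hu (Dc_sym hL hB1 hw₀ hw hDw) hDu with h' | h'
        · exact h'
        · exact absurd h' hne
  -- the finite frame
  set XF := Xfin L Γ w₀ with hXFdef
  have htypeX : ∀ w ∈ C, typeOf Γ w ∈ XF := by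
    intro w hw
    exact Finset.mem_filter.2 ⟨Finset.mem_powerset.2 (Finset.filter_subset _ _), ⟨w, hw, rfl⟩⟩
  have hS₀ : typeOf Γ w₀ ∈ XF := htypeX w₀ hC₀
  set X := {S : Finset BForm // S ∈ XF} with hXdef
  set x₀ : X := ⟨typeOf Γ w₀, hS₀⟩ with hx₀def
  set Rf : X → X → Prop := fun S T => Rfin L Γ w₀ S.val T.val with hRfdef
  set Df : X → X → Prop := fun S T => Dfin L Γ w₀ S.val T.val with hDfdef
  set θf : ℕ → X → Prop := fun p S => BForm.var p ∈ S.val with hθfdef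
  have hXw : ∀ S : X, ∃ w ∈ C, typeOf Γ w = S.val := fun S => (Finset.mem_filter.1 S.2).2
  have hDf_of_ne : ∀ S T : X, S ≠ T → Df S T := by
    intro S T hne
    obtain ⟨w, hwC, hwt⟩ := hXw S
    obtain ⟨u, huC, hut⟩ := hXw T
    have hwu : w ≠ u := by
      intro hEq
      exact hne (Subtype.ext (by rw [← hwt, ← hut, hEq]))
    exact ⟨w, hwC, u, huC, hCdiff w hwC u huC hwu, hwt, hut⟩
  have hDf_sym : ∀ S T : X, Df S T → Df T S := by
    rintro S T ⟨w, hwC, u, huC, hD, hwt, hut⟩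
    exact ⟨u, huC, w, hwC, Dc_sym hL hB1 (hCmcs w hwC) (hCmcs u huC) hD, hut, hwt⟩
  have hRf_sym : ∀ S T : X, Rf S T → Rf T S := by
    rintro S T ⟨w, hwC, u, huC, hR, hwt, hut⟩
    exact ⟨u, huC, w, hwC, Rc_sym hL hSym (hCmcs w hwC) (hCmcs u huC) hR, hut, hwt⟩
  -- the truth lemma
  have TL : ∀ ψ, ψ ∈ Γ → ∀ S : X, (BSat Rf Df θf S ψ ↔ ψ ∈ S.val) := by
    intro ψ
    induction ψ with
    | var p => intro _ S; exact Iff.rfl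
    | bot =>
      intro _ S
      simp only [bsat_bot, false_iff]
      intro hbot
      obtain ⟨w, hwC, hwt⟩ := hXw S
      exact mcs_bot hL (hCmcs w hwC) (typeOf_mem.1 (hwt ▸ hbot)).2
    | imp a b iha ihb =>
      intro hmem S
      have haΓ : a ∈ Γ := hΓ _ hmem (by
        simp only [BForm.sub, Finset.mem_insert, Finset.mem_union]
        exact Or.inr (Or.inl (mem_sub_self a)))
      have hbΓ : b ∈ Γ := hΓ _ hmem (by
        simp only [BForm.sub, Finset.mem_insert, Finset.mem_union]
        exact Or.inr (Or.inr (mem_sub_self b)))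
      rw [bsat_imp, iha haΓ S, ihb hbΓ S]
      obtain ⟨w, hwC, hwt⟩ := hXw S
      have hw := hCmcs w hwC
      rw [← hwt]
      simp only [typeOf_mem]
      constructor
      · intro hab
        refine ⟨hmem, (mcs_imp_iff hL hw).2 (fun ha => (hab ⟨haΓ, ha⟩).2)⟩
      · rintro ⟨_, hab⟩ ⟨_, ha⟩
        exact ⟨hbΓ, mcs_mp hL hw hab ha⟩
    | dia a iha =>
      intro hmem S
      have haΓ : a ∈ Γ := hΓ _ hmem (by
        simp only [BForm.sub, Finset.mem_insert]
        exact Or.inr (mem_sub_self a))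
      rw [bsat_dia]
      constructor
      · rintro ⟨T, ⟨w, hwC, u, huC, hRc, hwt, hut⟩, hTa⟩
        have hau : a ∈ u := (typeOf_mem.1 (hut ▸ ((iha haΓ T).1 hTa))).2
        have hd : dia a ∈ w :=
          back_M hL hL.monoDia (hCmcs w hwC) (hCmcs u huC) hRc hau
        rw [← hwt]
        exact typeOf_mem.2 ⟨hmem, hd⟩
      · intro hS
        obtain ⟨w, hwC, hwt⟩ := hXw S
        have hdw : dia a ∈ w := (typeOf_mem.1 (hwt ▸ hS)).2
        obtain ⟨u, hu, hRM, hau⟩ :=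
          exists_M hL hL.monoDia hL.negDiaBot (dia_or_L hL) (hCmcs w hwC) hdw
        have huC : u ∈ C := hCR w hwC u hu hRM
        refine ⟨⟨typeOf Γ u, htypeX u huC⟩, ⟨w, hwC, u, huC, hRM, hwt, rfl⟩, ?_⟩
        exact (iha haΓ _).2 (typeOf_mem.2 ⟨haΓ, hau⟩)
    | ddia a iha =>
      intro hmem S
      have haΓ : a ∈ Γ := hΓ _ hmem (by
        simp only [BForm.sub, Finset.mem_insert]
        exact Or.inr (mem_sub_self a))
      rw [bsat_ddia]
      constructor
      · rintro ⟨T, ⟨w, hwC, u, huC, hDc, hwt, hut⟩, hTa⟩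
        have hau : a ∈ u := (typeOf_mem.1 (hut ▸ ((iha haΓ T).1 hTa))).2
        have hd : ddia a ∈ w :=
          back_M hL hL.monoDdia (hCmcs w hwC) (hCmcs u huC) hDc hau
        rw [← hwt]
        exact typeOf_mem.2 ⟨hmem, hd⟩
      · intro hS
        obtain ⟨w, hwC, hwt⟩ := hXw S
        have hdw : ddia a ∈ w := (typeOf_mem.1 (hwt ▸ hS)).2
        obtain ⟨u, hu, hDM, hau⟩ :=
          exists_M hL hL.monoDdia hL.negDdiaBot (ddia_or_L hL) (hCmcs w hwC) hdw
        have huC : u ∈ C := hCD w hwC u hu hDM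
        refine ⟨⟨typeOf Γ u, htypeX u huC⟩, ⟨w, hwC, u, huC, hDM, hwt, rfl⟩, ?_⟩
        exact (iha haΓ _).2 (typeOf_mem.2 ⟨haΓ, hau⟩)
  -- validity of the axioms in the finite frame
  have hValCF : BValid Rf Df (BForm.CF k) := by
    intro θv Ss
    rw [BForm.CF, bsat_imp]
    intro hant
    rw [bsat_All] at hant
    obtain ⟨hant1, hant2⟩ := hant
    have hcolor : ∀ T : X, (Df Ss T ∨ T = Ss) →
        ∃ i, i < k ∧ θv i T ∧ ∀ j < k, j ≠ i → ¬ θv j T := by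
      intro T hT
      have hA : BSat Rf Df θv T (bigOr ((List.range k).map fun i =>
          BForm.and (BForm.var i) (bigAnd (((List.range k).filter (fun j => j ≠ i)).map
            fun j => neg (BForm.var j))))) := by
        rcases hT with h' | rfl
        · exact hant1 T h'
        · exact hant2
      rw [bsat_bigOr] at hA
      obtain ⟨b, hb, hTb⟩ := hA
      rw [List.mem_map] at hb
      obtain ⟨i, hik, rfl⟩ := hb
      rw [bsat_and] at hTb
      obtain ⟨hTi, hTn⟩ := hTb
      rw [bsat_bigAnd] at hTn
      refine ⟨i, List.mem_range.1 hik, hTi, ?_⟩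
      intro j hj hji hTj
      have hmem : neg (BForm.var j) ∈ ((List.range k).filter (fun j => j ≠ i)).map
          (fun j => neg (BForm.var j)) :=
        List.mem_map.2 ⟨j, List.mem_filter.2 ⟨List.mem_range.2 hj, by simpa using hji⟩, rfl⟩
      exact (hTn _ hmem) hTj
    obtain ⟨wS, hwSC, hwSt⟩ := hXw Ss
    have hwS := hCmcs wS hwSC
    set σ : ℕ → BForm := fun i =>
      bigOr ((XF.filter (fun T => ∀ hT : T ∈ XF, θv i ⟨T, hT⟩)).toList.map (chi Γ)) with hσdef
    have hσ : ∀ (i : ℕ) (u : Set BForm), MCS L u → ∀ huX : typeOf Γ u ∈ XF,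
        (σ i ∈ u ↔ θv i ⟨typeOf Γ u, huX⟩) := by
      intro i u hu huX
      rw [hσdef, mcs_bigOr hL hu]
      simp only [List.mem_map, Finset.mem_toList, Finset.mem_filter]
      constructor
      · rintro ⟨b, ⟨T, ⟨hTX, hTθ⟩, rfl⟩, hbu⟩
        have hTsub : T ⊆ Γ := Finset.mem_powerset.1 (Finset.mem_filter.1 hTX).1
        have hEq : typeOf Γ u = T := (chi_mem hL hu hTsub).1 hbu
        subst hEq
        exact hTθ huX
      · intro hθ
        refine ⟨chi Γ (typeOf Γ u), ⟨typeOf Γ u, ⟨huX, fun h' => hθ⟩, rfl⟩, ?_⟩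
        exact (chi_mem hL hu (Finset.mem_powerset.1 (Finset.mem_filter.1 huX).1)).2 rfl
    set Aσ : BForm := bigOr ((List.range k).map fun i =>
      BForm.and (σ i) (bigAnd (((List.range k).filter (fun j => j ≠ i)).map
        fun j => neg (σ j)))) with hAσdef
    set Bσ : BForm := bigOr ((List.range k).map fun i => BForm.and (σ i) (dia (σ i))) with hBσdef
    have hAσ : ∀ u ∈ C, (u = wS ∨ Dc wS u) → Aσ ∈ u := by
      intro u huC hcase
      have hu := hCmcs u huC
      have huX := htypeX u huC
      have hrel : Df Ss ⟨typeOf Γ u, huX⟩ ∨ (⟨typeOf Γ u, huX⟩ : X) = Ss := by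
        rcases hcase with rfl | hD
        · right; exact Subtype.ext hwSt
        · left; exact ⟨wS, hwSC, u, huC, hD, hwSt, rfl⟩
      obtain ⟨i, hik, hθi, huniq⟩ := hcolor _ hrel
      rw [hAσdef, mcs_bigOr hL hu]
      refine ⟨_, List.mem_map.2 ⟨i, List.mem_range.2 hik, rfl⟩, ?_⟩
      rw [mcs_and hL hu]
      constructor
      · exact (hσ i u hu huX).2 hθi
      · rw [mcs_bigAnd hL hu]
        intro b hb
        rw [List.mem_map] at hb
        obtain ⟨j, hj, rfl⟩ := hb
        have hjk : j < k ∧ j ≠ i := by simpa [List.mem_filter, List.mem_range] using hj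
        refine (mcs_neg hL hu).2 (fun hσj => ?_)
        exact huniq j hjk.1 hjk.2 ((hσ j u hu huX).1 hσj)
    have hCFinst : BForm.imp (All Aσ) (Ex Bσ) ∈ wS := by
      have h1 : BForm.subst σ (BForm.CF k) ∈ L := hL.subst _ σ hCF
      rw [subst_CF] at h1
      exact mcs_thm hL hwS h1
    have hAll : All Aσ ∈ wS := by
      have hA1 : Aσ ∈ wS := hAσ wS hwSC (Or.inl rfl)
      have hA2 : dbox Aσ ∈ wS := by
        rcases mcs_em hL hwS (dbox Aσ) with h' | h'
        · exact h'
        exfalso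
        have hdd : ddia (neg Aσ) ∈ wS := by
          refine mcs_imp hL hwS h' ?_
          refine hL.taut _ (fun v h0 h1 => ?_)
          simp only [BForm.dbox, BForm.neg, h1, iff_false_intro h0]
          tauto
        obtain ⟨u, hu, hDM, hnA⟩ :=
          exists_M hL hL.monoDdia hL.negDdiaBot (ddia_or_L hL) hwS hdd
        have huC : u ∈ C := hCD wS hwSC u hu hDM
        exact mcs_nb hL hu (hAσ u huC (Or.inr hDM)) hnA
      exact (mcs_and hL hwS).2 ⟨hA2, hA1⟩
    have hEx : Ex Bσ ∈ wS := mcs_mp hL hwS hCFinst hAll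
    rw [BForm.Ex] at hEx
    have hB : ∀ u, u ∈ C → Bσ ∈ u → ∀ huX : typeOf Γ u ∈ XF,
        BSat Rf Df θv (⟨typeOf Γ u, huX⟩ : X)
          (bigOr ((List.range k).map fun i => BForm.and (BForm.var i) (dia (BForm.var i)))) := by
      intro u huC hBu huX
      have hu := hCmcs u huC
      rw [hBσdef, mcs_bigOr hL hu] at hBu
      obtain ⟨b, hb, hbu⟩ := hBu
      rw [List.mem_map] at hb
      obtain ⟨i, hik, rfl⟩ := hb
      rw [mcs_and hL hu] at hbu
      obtain ⟨hσi, hdia⟩ := hbu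
      obtain ⟨z, hz, hRz, hσz⟩ :=
        exists_M hL hL.monoDia hL.negDiaBot (dia_or_L hL) hu hdia
      have hzC : z ∈ C := hCR u huC z hz hRz
      rw [bsat_bigOr]
      refine ⟨_, List.mem_map.2 ⟨i, hik, rfl⟩, ?_⟩
      rw [bsat_and]
      refine ⟨(hσ i u hu huX).1 hσi, ?_⟩
      rw [bsat_dia]
      exact ⟨⟨typeOf Γ z, htypeX z hzC⟩, ⟨u, huC, z, hzC, hRz, rfl, rfl⟩,
        (hσ i z hz (htypeX z hzC)).1 hσz⟩
    rw [bsat_Ex]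
    rcases (mcs_or hL hwS).1 hEx with hd | hb2
    · obtain ⟨y, hy, hDy, hBy⟩ :=
        exists_M hL hL.monoDdia hL.negDdiaBot (ddia_or_L hL) hwS hd
      have hyC : y ∈ C := hCD wS hwSC y hy hDy
      exact Or.inl ⟨⟨typeOf Γ y, htypeX y hyC⟩, ⟨wS, hwSC, y, hyC, hDy, hwSt, rfl⟩,
        hB y hyC hBy (htypeX y hyC)⟩
    · right
      have hfin := hB wS hwSC hb2 (htypeX wS hwSC)
      have hEq : (⟨typeOf Γ wS, htypeX wS hwSC⟩ : X) = Ss := Subtype.ext hwSt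
      rwa [hEq] at hfin
  -- validity of all axioms
  have hAxVal : (KBDiffAx ∪ {BForm.CF k}) ⊆ {ψ | BValid Rf Df ψ} := by
    intro ψ hψ
    simp only [KBDiffAx, KDiffAx, Set.mem_union, Set.mem_insert_iff,
      Set.mem_singleton_iff] at hψ
    rcases hψ with (rfl | rfl | rfl | rfl) | rfl
    · -- axSymm
      intro θv S
      rw [BForm.axSymm, bsat_imp]
      intro hs
      rw [bsat_box]
      intro T hST
      rw [bsat_dia]
      exact ⟨S, hRf_sym S T hST, hs⟩
    · -- axB1
      intro θv S
      rw [BForm.axB1, bsat_imp]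
      intro hs
      rw [bsat_dbox]
      intro T hST
      rw [bsat_ddia]
      exact ⟨S, hDf_sym S T hST, hs⟩
    · -- axB2
      intro θv S
      rw [BForm.axB2, bsat_imp]
      intro hs
      rw [bsat_ddia] at hs
      obtain ⟨T, hST, hT⟩ := hs
      rw [bsat_ddia] at hT
      obtain ⟨U, hTU, hU⟩ := hT
      rw [bsat_Ex]
      by_cases hSU : S = U
      · exact Or.inr (hSU ▸ hU)
      · exact Or.inl ⟨U, hDf_of_ne S U hSU, hU⟩
    · -- axB3
      intro θv S
      rw [BForm.axB3, bsat_imp]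
      intro hs
      rw [bsat_dia] at hs
      obtain ⟨T, hST, hT⟩ := hs
      rw [bsat_Ex]
      by_cases hST' : S = T
      · exact Or.inr (hST' ▸ hT)
      · exact Or.inl ⟨T, hDf_of_ne S T hST', hT⟩
    · exact hValCF
  refine ⟨X, inferInstance, ⟨x₀⟩, Rf, Df, θf, x₀, ?_, ?_, ?_⟩
  · calc Fintype.card X = XF.card := Fintype.card_coe _
      _ ≤ Γ.powerset.card := by rw [hXFdef, Xfin]; exact Finset.card_filter_le _ _
      _ = 2 ^ Γ.card := Finset.card_powerset Γ
  · intro ψ hψ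
    exact NormalLogicOf_le (isNormal_valid Rf Df) hAxVal hψ
  · rw [TL φ (mem_sub_self φ) x₀]
    intro hφ
    exact hφw₀ (typeOf_mem.1 hφ).2

end Stmt5
/-- KB_≠ + CF_k has the exponential finite model property. -/
theorem stmt5 (k : ℕ) (φ : BForm)
    (h : φ ∉ NormalLogicOf (KBDiffAx ∪ {BForm.CF k})) :
    ∃ (X : Type) (_ : Fintype X) (_ : Nonempty X)
      (R D : X → X → Prop) (θ : ℕ → X → Prop) (x : X),
      Fintype.card X ≤ 2 ^ (BForm.sub φ).card ∧
      (∀ ψ ∈ NormalLogicOf (KBDiffAx ∪ {BForm.CF k}), BValid R D ψ) ∧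
      ¬ BSat R D θ x φ :=
  Stmt5.main k φ h
end

section
/- Let k be a natural number. A bimodal formula φ belongs to the logic K_≠ + CF_k if and only if φ is valid in every bimodal frame of the form (X,R,≠_X), where X is a nonempty set, R ⊆ X×X, ≠_X is the inequality relation on X, and C(X,R)>k. -/
namespace Stmt6
open BForm

attribute [local instance] Classical.propDecidable

variable {X : Type} {R D : X → X → Prop} {θ : ℕ → X → Prop}

lemma bsat_neg {x : X} {φ : BForm} : BSat R D θ x (neg φ) ↔ ¬ BSat R D θ x φ := by
  simp [BForm.neg, BSat]

lemma bsat_or {x : X} {a b : BForm} :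
    BSat R D θ x (or a b) ↔ BSat R D θ x a ∨ BSat R D θ x b := by
  simp only [BForm.or, BSat, bsat_neg]; tauto

lemma bsat_and {x : X} {a b : BForm} :
    BSat R D θ x (and a b) ↔ BSat R D θ x a ∧ BSat R D θ x b := by
  simp only [BForm.and, BForm.neg, BSat]; tauto

lemma bsat_top {x : X} : BSat R D θ x top := by simp [BForm.top, bsat_neg, BSat]

lemma bsat_box {x : X} {a : BForm} :
    BSat R D θ x (box a) ↔ ∀ y, R x y → BSat R D θ y a := by
  rw [BForm.box, bsat_neg]
  constructor
  · intro h y hy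
    by_contra hc
    exact h ⟨y, hy, bsat_neg.mpr hc⟩
  · rintro h ⟨y, hy, hn⟩
    exact bsat_neg.mp hn (h y hy)

lemma bsat_dbox {x : X} {a : BForm} :
    BSat R D θ x (dbox a) ↔ ∀ y, D x y → BSat R D θ y a := by
  rw [BForm.dbox, bsat_neg]
  constructor
  · intro h y hy
    by_contra hc
    exact h ⟨y, hy, bsat_neg.mpr hc⟩
  · rintro h ⟨y, hy, hn⟩
    exact bsat_neg.mp hn (h y hy)

lemma bsat_Ex {x : X} {a : BForm} :
    BSat R D θ x (Ex a) ↔ ∃ y, (D x y ∨ y = x) ∧ BSat R D θ y a := by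
  rw [BForm.Ex, bsat_or]
  show (∃ y, D x y ∧ BSat R D θ y a) ∨ _ ↔ _
  constructor
  · rintro (⟨y, hy, h⟩ | h)
    · exact ⟨y, Or.inl hy, h⟩
    · exact ⟨x, Or.inr rfl, h⟩
  · rintro ⟨y, hy | rfl, h⟩
    · exact Or.inl ⟨y, hy, h⟩
    · exact Or.inr h

lemma bsat_All {x : X} {a : BForm} :
    BSat R D θ x (All a) ↔ ∀ y, (D x y ∨ y = x) → BSat R D θ y a := by
  simp only [BForm.All, bsat_and, bsat_dbox]
  constructor
  · rintro ⟨h1, h2⟩ y (hy | rfl)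
    · exact h1 y hy
    · exact h2
  · intro h; exact ⟨fun y hy => h y (Or.inl hy), h x (Or.inr rfl)⟩

lemma bsat_bigOr {x : X} {l : List BForm} :
    BSat R D θ x (bigOr l) ↔ ∃ a ∈ l, BSat R D θ x a := by
  induction l with
  | nil => simp [bigOr, BSat]
  | cons a l ih => simp [bigOr, bsat_or, ih]

lemma bsat_bigAnd {x : X} {l : List BForm} :
    BSat R D θ x (bigAnd l) ↔ ∀ a ∈ l, BSat R D θ x a := by
  induction l with
  | nil => simp [bigAnd, bsat_top]
  | cons a l ih => simp [bigAnd, bsat_and, ih]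

lemma bsat_subst {σ : ℕ → BForm} {φ : BForm} {x : X} :
    BSat R D θ x (subst σ φ) ↔ BSat R D (fun p y => BSat R D θ y (σ p)) x φ := by
  induction φ generalizing x with
  | var p => simp [subst, BSat]
  | bot => simp [subst, BSat]
  | imp a b iha ihb => simp [subst, BSat, iha, ihb]
  | dia a ih => simp [subst, BSat, ih]
  | ddia a ih => simp [subst, BSat, ih]

lemma bvalid_of_taut {φ : BForm} (h : IsTautology φ) : BValid R D φ := by
  intro θ x
  exact h (fun γ => BSat R D θ x γ) (by simp [BSat]) (fun a b => Iff.rfl)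

end Stmt6

namespace Stmt6
open BForm

attribute [local instance] Classical.propDecidable

/-- The set of formulas valid in all difference frames with chromatic number > k. -/
def VSet (k : ℕ) : Set BForm :=
  {ψ | ∀ (X : Type) (_ : Nonempty X) (R : X → X → Prop),
        ChromGT R k → BValid R (fun x y : X => x ≠ y) ψ}

section Valid
variable {X : Type} {R : X → X → Prop}

lemma dor (x y : X) : x ≠ y ∨ y = x := by
  rcases eq_or_ne y x with h | h
  · exact Or.inr h
  · exact Or.inl h.symm

lemma bvalid_axB1 : BValid R (fun x y : X => x ≠ y) BForm.axB1 := by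
  intro θ x
  intro hp
  rw [bsat_dbox]
  intro y hxy
  exact ⟨x, Ne.symm hxy, hp⟩

lemma bvalid_axB2 : BValid R (fun x y : X => x ≠ y) BForm.axB2 := by
  intro θ x
  intro h
  obtain ⟨y, -, h⟩ := h
  obtain ⟨z, -, hz⟩ := h
  rw [bsat_Ex]
  exact ⟨z, dor x z, hz⟩

lemma bvalid_axB3 : BValid R (fun x y : X => x ≠ y) BForm.axB3 := by
  intro θ x
  intro h
  obtain ⟨y, -, hy⟩ := h
  rw [bsat_Ex]
  exact ⟨y, dor x y, hy⟩

lemma bvalid_CF (k : ℕ) (hX : Nonempty X) (hch : ChromGT R k) :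
    BValid R (fun x y : X => x ≠ y) (CF k) := by
  intro θ x0
  intro hant
  rw [bsat_All] at hant
  -- every point satisfies the big disjunction
  have hall : ∀ y : X, ∃ i ∈ List.range k, θ i y ∧
      ∀ j ∈ (List.range k).filter (fun j => j ≠ i), ¬ θ j y := by
    intro y
    have := hant y (dor x0 y)
    rw [bsat_bigOr] at this
    obtain ⟨a, ha, hsat⟩ := this
    simp only [List.mem_map] at ha
    obtain ⟨i, hi, rfl⟩ := ha
    rw [bsat_and] at hsat
    refine ⟨i, hi, hsat.1, ?_⟩
    intro j hj
    have h2 := (bsat_bigAnd.mp hsat.2)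
    have : BSat R (fun x y : X => x ≠ y) θ y (neg (var j)) := by
      apply h2
      exact List.mem_map.mpr ⟨j, hj, rfl⟩
    rw [bsat_neg] at this
    exact this
  -- color function
  have hcol : ∀ y : X, ∃ i, i < k ∧ θ i y ∧ ∀ j, j < k → j ≠ i → ¬ θ j y := by
    intro y
    obtain ⟨i, hi, h1, h2⟩ := hall y
    rw [List.mem_range] at hi
    refine ⟨i, hi, h1, fun j hj hji => h2 j ?_⟩
    rw [List.mem_filter]
    exact ⟨List.mem_range.mpr hj, by simp [hji]⟩
  classical
  choose c hck hcθ hcu using hcol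
  by_contra hcon
  -- build a proper partition
  have hnocons : ∀ y : X, ∀ i, i < k → ¬ (θ i y ∧ ∃ z, R y z ∧ θ i z) := by
    intro y i hik hbad
    apply hcon
    rw [bsat_Ex]
    refine ⟨y, dor x0 y, ?_⟩
    rw [bsat_bigOr]
    refine ⟨_, List.mem_map.mpr ⟨i, List.mem_range.mpr hik, rfl⟩, ?_⟩
    rw [bsat_and]
    exact ⟨hbad.1, hbad.2⟩
  set cell : ℕ → Set X := fun i => {y | c y = i} with hcell
  set A : Finset (Set X) :=
    ((Finset.range k).filter (fun i => ∃ y, c y = i)).image cell with hA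
  have hcard : A.card ≤ k := le_trans (Finset.card_image_le)
    (le_trans (Finset.card_filter_le _ _) (by simp))
  refine hch A hcard ⟨?_, ?_, ?_, ?_⟩
  · rintro a ha
    rw [hA] at ha
    simp only [Finset.coe_image, Set.mem_image, Finset.mem_coe, Finset.mem_filter] at ha
    obtain ⟨i, ⟨-, y, hy⟩, rfl⟩ := ha
    exact ⟨y, hy⟩
  · rintro a ha b hb hab
    rw [hA] at ha hb
    simp only [Finset.coe_image, Set.mem_image, Finset.mem_coe, Finset.mem_filter] at ha hb
    obtain ⟨i, -, rfl⟩ := ha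
    obtain ⟨j, -, rfl⟩ := hb
    ext y
    simp only [Set.mem_inter_iff, Set.mem_empty_iff_false, iff_false]
    rintro ⟨h1, h2⟩
    apply hab
    have e1 : c y = i := h1
    have e2 : c y = j := h2
    rw [← e1, ← e2]
  · ext y
    simp only [Set.mem_sUnion, Set.mem_univ, iff_true]
    refine ⟨cell (c y), ?_, rfl⟩
    rw [hA]
    simp only [Finset.coe_image, Set.mem_image, Finset.mem_coe, Finset.mem_filter]
    exact ⟨c y, ⟨Finset.mem_range.mpr (hck y), y, rfl⟩, rfl⟩
  · rintro a ha y hy z hz hR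
    rw [hA] at ha
    simp only [Finset.coe_image, Set.mem_image, Finset.mem_coe, Finset.mem_filter] at ha
    obtain ⟨i, ⟨hik, -⟩, rfl⟩ := ha
    rw [Finset.mem_range] at hik
    have hyi : c y = i := hy
    have hzi : c z = i := hz
    exact hnocons y i hik ⟨hyi ▸ hcθ y, z, hR, hzi ▸ hcθ z⟩

end Valid

lemma VSet_normal (k : ℕ) : IsNormalBL (VSet k) := by
  constructor
  · intro φ h X hX R hch
    exact bvalid_of_taut h
  · intro X hX R hch θ x
    rw [bsat_neg]
    rintro ⟨y, -, h⟩
    exact h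
  · intro X hX R hch θ x
    rw [bsat_neg]
    rintro ⟨y, -, h⟩
    exact h
  · intro X hX R hch θ x
    intro h
    obtain ⟨y, hy, hor⟩ := h
    rw [bsat_or] at hor ⊢
    exact hor.imp (fun h => ⟨y, hy, h⟩) (fun h => ⟨y, hy, h⟩)
  · intro X hX R hch θ x
    intro h
    obtain ⟨y, hy, hor⟩ := h
    rw [bsat_or] at hor ⊢
    exact hor.imp (fun h => ⟨y, hy, h⟩) (fun h => ⟨y, hy, h⟩)
  · intro φ ψ h1 h2 X hX R hch θ x
    exact h1 X hX R hch θ x (h2 X hX R hch θ x)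
  · intro φ σ h X hX R hch θ x
    rw [bsat_subst]
    exact h X hX R hch _ x
  · intro φ ψ h X hX R hch θ x
    rintro ⟨y, hy, hs⟩
    exact ⟨y, hy, h X hX R hch θ y hs⟩
  · intro φ ψ h X hX R hch θ x
    rintro ⟨y, hy, hs⟩
    exact ⟨y, hy, h X hX R hch θ y hs⟩

lemma soundness (k : ℕ) :
    NormalLogicOf (KDiffAx ∪ {BForm.CF k}) ⊆ VSet k := by
  apply Set.sInter_subset_of_mem
  refine ⟨VSet_normal k, ?_⟩
  rintro ψ (h | h)
  · rcases h with h | h | h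
    · exact h ▸ fun X hX R hch => bvalid_axB1
    · exact h ▸ fun X hX R hch => bvalid_axB2
    · exact h ▸ fun X hX R hch => bvalid_axB3
  · rw [Set.mem_singleton_iff] at h
    exact h ▸ fun X hX R hch => bvalid_CF k hX hch

end Stmt6

namespace Stmt6
open BForm

lemma univ_normal : IsNormalBL (Set.univ : Set BForm) := by
  constructor <;> intros <;> trivial

lemma normalLogicOf_normal (Ax : Set BForm) : IsNormalBL (NormalLogicOf Ax) := by
  constructor
  · intro φ h L hl; exact hl.1.taut φ h
  · intro L hl; exact hl.1.negDiaBot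
  · intro L hl; exact hl.1.negDdiaBot
  · intro L hl; exact hl.1.diaOr
  · intro L hl; exact hl.1.ddiaOr
  · intro φ ψ h1 h2 L hl; exact hl.1.mp φ ψ (h1 L hl) (h2 L hl)
  · intro φ σ h L hl; exact hl.1.subst φ σ (h L hl)
  · intro φ ψ h L hl; exact hl.1.monoDia φ ψ (h L hl)
  · intro φ ψ h L hl; exact hl.1.monoDdia φ ψ (h L hl)

lemma subset_normalLogicOf (Ax : Set BForm) : Ax ⊆ NormalLogicOf Ax :=
  fun φ h L hl => hl.2 h

/-- Abstract facts about a diamond modality. -/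
structure ModOK (L : Set BForm) (M : BForm → BForm) : Prop where
  mono : ∀ a b, imp a b ∈ L → imp (M a) (M b) ∈ L
  orE : ∀ a b, imp (M (or a b)) (or (M a) (M b)) ∈ L
  botE : neg (M bot) ∈ L

section Logic
variable {L : Set BForm} (hL : IsNormalBL L)
include hL

/-- Modus ponens, two-premise version. -/
lemma mp2 {a b c : BForm} (h : imp a (imp b c) ∈ L) (h1 : a ∈ L) (h2 : b ∈ L) :
    c ∈ L := hL.mp _ _ (hL.mp _ _ h h1) h2

lemma imp_trans {a b c : BForm} (h1 : imp a b ∈ L) (h2 : imp b c ∈ L) :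
    imp a c ∈ L := by
  refine mp2 hL (hL.taut _ ?_) h1 h2
  intro v hb hi
  simp only [hi]; tauto

/-- Substitution instance of diaOr. -/
lemma dia_orE (a b : BForm) :
    imp (dia (or a b)) (or (dia a) (dia b)) ∈ L := by
  have := hL.subst _ (fun n => if n = 0 then a else b) hL.diaOr
  simpa [BForm.subst, BForm.or, BForm.neg] using this

lemma ddia_orE (a b : BForm) :
    imp (ddia (or a b)) (or (ddia a) (ddia b)) ∈ L := by
  have := hL.subst _ (fun n => if n = 0 then a else b) hL.ddiaOr
  simpa [BForm.subst, BForm.or, BForm.neg] using this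

lemma modOK_dia : ModOK L dia := ⟨hL.monoDia, dia_orE hL, hL.negDiaBot⟩
lemma modOK_ddia : ModOK L ddia := ⟨hL.monoDdia, ddia_orE hL, hL.negDdiaBot⟩

variable {M : BForm → BForm} (hM : ModOK L M)
include hM

/-- Necessitation for the dual box. -/
lemma modOK_nec {a : BForm} (h : a ∈ L) : neg (M (neg a)) ∈ L := by
  have h1 : imp (neg a) bot ∈ L := by
    refine hL.mp a _ (hL.taut (imp a (imp (neg a) bot)) ?_) h
    intro v hb hi; simp only [BForm.neg, hi]; tauto
  exact imp_trans hL (hM.mono _ _ h1) hM.botE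

/-- Box collects conjunctions: ¬M¬a ∧ ¬M¬b → ¬M¬(a∧b). -/
lemma modOK_boxAnd (a b : BForm) :
    imp (and (neg (M (neg a))) (neg (M (neg b)))) (neg (M (neg (and a b)))) ∈ L := by
  have t1 : imp (neg (and a b)) (or (neg a) (neg b)) ∈ L := by
    apply hL.taut; intro v hb hi
    simp only [BForm.and, BForm.or, BForm.neg, hi]; tauto
  have h1 : imp (M (neg (and a b))) (or (M (neg a)) (M (neg b))) ∈ L :=
    imp_trans hL (hM.mono _ _ t1) (hM.orE _ _)
  refine hL.mp _ _ (hL.taut _ ?_) h1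
  intro v hb hi
  simp only [BForm.and, BForm.or, BForm.neg, hi]; tauto

/-- M a ∧ ¬M¬b → M (a∧b). -/
lemma modOK_diaAnd (a b : BForm) :
    imp (and (M a) (neg (M (neg b)))) (M (and a b)) ∈ L := by
  have t1 : imp a (or (and a b) (neg b)) ∈ L := by
    apply hL.taut; intro v hb hi
    simp only [BForm.and, BForm.or, BForm.neg, hi]; tauto
  have h1 : imp (M a) (or (M (and a b)) (M (neg b))) ∈ L :=
    imp_trans hL (hM.mono _ _ t1) (hM.orE _ _)
  refine hL.mp _ _ (hL.taut _ ?_) h1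
  intro v hb hi
  simp only [BForm.and, BForm.or, BForm.neg, hi]; tauto

end Logic
end Stmt6

namespace Stmt6
open BForm

attribute [local instance] Classical.propDecidable

/-- Provability from a set of assumptions. -/
def Prv (L : Set BForm) (Γ : Set BForm) (γ : BForm) : Prop :=
  ∃ l : List BForm, (∀ δ ∈ l, δ ∈ Γ) ∧ imp (bigAnd l) γ ∈ L

def ConsistentS (L : Set BForm) (Γ : Set BForm) : Prop := ¬ Prv L Γ bot

section Prv
variable {L : Set BForm} (hL : IsNormalBL L)
include hL

lemma bigAnd_mem {l : List BForm} {δ : BForm} (h : δ ∈ l) :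
    imp (bigAnd l) δ ∈ L := by
  induction l with
  | nil => cases h
  | cons a l ih =>
    rcases List.mem_cons.mp h with rfl | h'
    · apply hL.taut
      intro v hb hi
      simp only [bigAnd, BForm.and, BForm.neg, hi]; tauto
    · refine imp_trans hL ?_ (ih h')
      apply hL.taut
      intro v hb hi
      simp only [bigAnd, BForm.and, BForm.neg, hi]; tauto

lemma imp_bigAnd {l : List BForm} {c : BForm} (h : ∀ δ ∈ l, imp c δ ∈ L) :
    imp c (bigAnd l) ∈ L := by
  induction l with
  | nil =>
    apply hL.taut
    intro v hb hi
    simp only [bigAnd, BForm.top, BForm.neg, hi]; tauto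
  | cons a l ih =>
    have h1 := h a (List.mem_cons_self)
    have h2 := ih (fun δ hδ => h δ (List.mem_cons_of_mem a hδ))
    refine mp2 hL (hL.taut _ ?_) h1 h2
    intro v hb hi
    simp only [bigAnd, BForm.and, BForm.neg, hi]; tauto

lemma prv_of_mem {Γ : Set BForm} {γ : BForm} (h : γ ∈ Γ) : Prv L Γ γ :=
  ⟨[γ], by simpa using h, bigAnd_mem hL (by simp)⟩

lemma prv_of_thm {Γ : Set BForm} {γ : BForm} (h : γ ∈ L) : Prv L Γ γ := by
  refine ⟨[], by simp, ?_⟩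
  refine hL.mp γ _ (hL.taut _ ?_) h
  intro v hb hi
  simp only [bigAnd, BForm.top, BForm.neg, hi]; tauto

lemma prv_mono {Γ Γ' : Set BForm} {γ : BForm} (hs : Γ ⊆ Γ') (h : Prv L Γ γ) :
    Prv L Γ' γ := by
  obtain ⟨l, h1, h2⟩ := h
  exact ⟨l, fun δ hδ => hs (h1 δ hδ), h2⟩

lemma prv_mp {Γ : Set BForm} {a b : BForm} (h1 : Prv L Γ (imp a b))
    (h2 : Prv L Γ a) : Prv L Γ b := by
  obtain ⟨l1, hl1, hp1⟩ := h1
  obtain ⟨l2, hl2, hp2⟩ := h2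
  refine ⟨l1 ++ l2, ?_, ?_⟩
  · intro δ hδ
    rcases List.mem_append.mp hδ with h | h
    · exact hl1 δ h
    · exact hl2 δ h
  · have e1 : imp (bigAnd (l1 ++ l2)) (bigAnd l1) ∈ L :=
      imp_bigAnd hL (fun δ hδ => bigAnd_mem hL (List.mem_append.mpr (Or.inl hδ)))
    have e2 : imp (bigAnd (l1 ++ l2)) (bigAnd l2) ∈ L :=
      imp_bigAnd hL (fun δ hδ => bigAnd_mem hL (List.mem_append.mpr (Or.inr hδ)))
    have f1 := imp_trans hL e1 hp1
    have f2 := imp_trans hL e2 hp2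
    refine mp2 hL (hL.taut _ ?_) f1 f2
    intro v hb hi
    simp only [hi]; tauto

lemma prv_neg_of_insert_bot {Γ : Set BForm} {a : BForm}
    (h : Prv L (insert a Γ) bot) : Prv L Γ (neg a) := by
  obtain ⟨l, hl, hp⟩ := h
  set lB := l.filter (fun δ => δ ≠ a) with hlB
  have hmem : ∀ δ ∈ lB, δ ∈ Γ := by
    intro δ hδ
    rw [hlB, List.mem_filter] at hδ
    have := hl δ hδ.1
    rcases this with h | h
    · exact absurd h (by simpa using hδ.2)
    · exact h
  refine ⟨lB, hmem, ?_⟩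
  have hstep : imp (and a (bigAnd lB)) (bigAnd l) ∈ L := by
    refine imp_bigAnd hL ?_
    intro δ hδ
    by_cases hda : δ = a
    · subst hda
      apply hL.taut; intro v hb hi
      simp only [BForm.and, BForm.neg, hi]; tauto
    · have : δ ∈ lB := by
        rw [hlB, List.mem_filter]
        exact ⟨hδ, by simpa using hda⟩
      refine imp_trans hL ?_ (bigAnd_mem hL this)
      apply hL.taut; intro v hb hi
      simp only [BForm.and, BForm.neg, hi]; tauto
  have hbad : imp (and a (bigAnd lB)) bot ∈ L := imp_trans hL hstep hp
  refine hL.mp _ _ (hL.taut _ ?_) hbad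
  intro v hb hi
  simp only [BForm.and, BForm.neg, hi]; tauto

end Prv

/-- Maximal consistent sets. -/
def IsMCS (L : Set BForm) (w : Set BForm) : Prop :=
  ConsistentS L w ∧ ∀ Γ, w ⊆ Γ → ConsistentS L Γ → Γ = w

section MCS
variable {L : Set BForm} (hL : IsNormalBL L) {w : Set BForm} (hw : IsMCS L w)
include hL hw

lemma mcs_closed {γ : BForm} (h : Prv L w γ) : γ ∈ w := by
  by_contra hc
  have hins : ¬ ConsistentS L (insert γ w) := by
    intro hcons
    exact hc (hw.2 _ (Set.subset_insert _ _) hcons ▸ Set.mem_insert γ w)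
  rw [ConsistentS, not_not] at hins
  have hn : Prv L w (neg γ) := prv_neg_of_insert_bot hL hins
  apply hw.1
  refine prv_mp hL ?_ h
  refine prv_mp hL (prv_of_thm hL (hL.taut _ ?_)) hn
  intro v hb hi
  simp only [BForm.neg, hi]; tauto

lemma mcs_thm {γ : BForm} (h : γ ∈ L) : γ ∈ w :=
  mcs_closed hL hw (prv_of_thm hL h)

lemma mcs_mp {a b : BForm} (h : imp a b ∈ w) (ha : a ∈ w) : b ∈ w :=
  mcs_closed hL hw (prv_mp hL (prv_of_mem hL h) (prv_of_mem hL ha))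

lemma mcs_neg {γ : BForm} : γ ∈ w ↔ neg γ ∉ w := by
  constructor
  · intro h hn
    apply hw.1
    refine prv_mp hL (prv_of_mem hL hn) (prv_of_mem hL h)
  · intro h
    apply mcs_closed hL hw
    by_contra hc
    have hins : ¬ ConsistentS L (insert γ w) := by
      intro hcons
      exact (hc (prv_of_mem hL (hw.2 _ (Set.subset_insert _ _) hcons ▸
        Set.mem_insert γ w)))
    rw [ConsistentS, not_not] at hins
    exact h (mcs_closed hL hw (prv_neg_of_insert_bot hL hins))

lemma mcs_bot : bot ∉ w := by
  intro h
  exact hw.1 (prv_of_mem hL h)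

lemma mcs_imp {a b : BForm} : imp a b ∈ w ↔ (a ∈ w → b ∈ w) := by
  constructor
  · intro h ha; exact mcs_mp hL hw h ha
  · intro h
    by_cases ha : a ∈ w
    · refine mcs_closed hL hw (prv_mp hL (prv_of_thm hL (hL.taut _ ?_))
        (prv_of_mem hL (h ha)))
      intro v hb hi; simp only [hi]; tauto
    · have hna : neg a ∈ w := by
        by_contra hc
        exact ha ((mcs_neg hL hw).mpr hc)
      refine mcs_closed hL hw (prv_mp hL (prv_of_thm hL (hL.taut _ ?_))
        (prv_of_mem hL hna))
      intro v hb hi; simp only [BForm.neg, hi]; tauto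

lemma mcs_and {a b : BForm} : and a b ∈ w ↔ a ∈ w ∧ b ∈ w := by
  constructor
  · intro h
    constructor
    · refine mcs_mp hL hw (mcs_thm hL hw (hL.taut (imp (and a b) a) ?_)) h
      intro v hb hi; simp only [BForm.and, BForm.neg, hi]; tauto
    · refine mcs_mp hL hw (mcs_thm hL hw (hL.taut (imp (and a b) b) ?_)) h
      intro v hb hi; simp only [BForm.and, BForm.neg, hi]; tauto
  · rintro ⟨h1, h2⟩
    refine mcs_mp hL hw (mcs_mp hL hw (mcs_thm hL hw
      (hL.taut (imp a (imp b (and a b))) ?_)) h1) h2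
    intro v hb hi; simp only [BForm.and, BForm.neg, hi]; tauto

lemma mcs_or {a b : BForm} : or a b ∈ w ↔ a ∈ w ∨ b ∈ w := by
  rw [BForm.or, mcs_imp hL hw]
  constructor
  · intro h
    by_cases ha : a ∈ w
    · exact Or.inl ha
    · refine Or.inr (h ?_)
      by_contra hc
      exact ha ((mcs_neg hL hw).mpr hc)
  · rintro (h | h) hna
    · exact absurd hna ((mcs_neg hL hw).mp h)
    · exact h

end MCS

lemma chain_list {c : Set (Set BForm)} (hchain : IsChain (· ⊆ ·) c)
    (hcne : c.Nonempty) :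
    ∀ l : List BForm, (∀ δ ∈ l, δ ∈ ⋃₀ c) → ∃ m ∈ c, ∀ δ ∈ l, δ ∈ m := by
  intro l
  induction l with
  | nil => exact fun _ => ⟨hcne.choose, hcne.choose_spec, by simp⟩
  | cons a l ih =>
    intro hl
    obtain ⟨m, hm, hml⟩ := ih (fun δ hδ => hl δ (List.mem_cons_of_mem a hδ))
    obtain ⟨m', hm', ham'⟩ := hl a (List.mem_cons_self)
    by_cases hmm : m = m'
    · subst hmm
      exact ⟨m, hm, fun δ hδ => by
        rcases List.mem_cons.mp hδ with rfl | h'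
        · exact ham'
        · exact hml δ h'⟩
    rcases hchain.total hm hm' with hss | hss
    · exact ⟨m', hm', fun δ hδ => by
        rcases List.mem_cons.mp hδ with rfl | h'
        · exact ham'
        · exact hss (hml δ h')⟩
    · exact ⟨m, hm, fun δ hδ => by
        rcases List.mem_cons.mp hδ with rfl | h'
        · exact hss ham'
        · exact hml δ h'⟩

/-- Lindenbaum's lemma. -/
lemma lindenbaum {L : Set BForm} (hL : IsNormalBL L) {Γ : Set BForm}
    (h : ConsistentS L Γ) : ∃ w, Γ ⊆ w ∧ IsMCS L w := by
  have hzorn := zorn_subset_nonempty {Γ' : Set BForm | ConsistentS L Γ'} ?_ Γ h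
  · obtain ⟨m, hsub, hmem, hmax⟩ := hzorn
    refine ⟨m, hsub, hmem, fun Γ' hΓ' hc => ?_⟩
    exact (hmax hc hΓ').antisymm hΓ'
  · intro c hcS hchain hcne
    refine ⟨⋃₀ c, ?_, fun s hs => Set.subset_sUnion_of_mem hs⟩
    rintro ⟨l, hl, hp⟩
    obtain ⟨m, hm, hml⟩ := chain_list hchain hcne l hl
    exact hcS hm ⟨l, hml, hp⟩

end Stmt6

namespace Stmt6
open BForm

section Canon
variable {L : Set BForm} (hL : IsNormalBL L)
include hL

lemma mbox_bigAnd {M : BForm → BForm} (hM : ModOK L M) {w : Set BForm}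
    (hw : IsMCS L w) {l : List BForm} (h : ∀ δ ∈ l, neg (M (neg δ)) ∈ w) :
    neg (M (neg (bigAnd l))) ∈ w := by
  induction l with
  | nil =>
    refine mcs_thm hL hw (modOK_nec hL hM (hL.taut top ?_))
    intro v hb hi; simp only [BForm.top, BForm.neg, hi]; tauto
  | cons a l ih =>
    have h1 := h a (List.mem_cons_self)
    have h2 := ih (fun δ hδ => h δ (List.mem_cons_of_mem a hδ))
    have hcol := mcs_thm hL hw (modOK_boxAnd hL hM a (bigAnd l))
    exact mcs_mp hL hw hcol ((mcs_and hL hw).mpr ⟨h1, h2⟩)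

/-- The existence lemma. -/
lemma modOK_exists {M : BForm → BForm} (hM : ModOK L M) {w : Set BForm}
    (hw : IsMCS L w) {γ : BForm} (h : M γ ∈ w) :
    ∃ u, IsMCS L u ∧ (∀ δ, neg (M (neg δ)) ∈ w → δ ∈ u) ∧ γ ∈ u := by
  set B : Set BForm := {δ | neg (M (neg δ)) ∈ w} with hB
  have hcons : ConsistentS L (insert γ B) := by
    intro hbot
    have hng : Prv L B (neg γ) := prv_neg_of_insert_bot hL hbot
    obtain ⟨l, hl, hp⟩ := hng
    have hbig : neg (M (neg (bigAnd l))) ∈ w := mbox_bigAnd hL hM hw hl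
    have hcontra : imp γ (neg (bigAnd l)) ∈ L := by
      refine hL.mp _ _ (hL.taut _ ?_) hp
      intro v hb hi; simp only [BForm.neg, hi]; tauto
    have hmono : imp (M γ) (M (neg (bigAnd l))) ∈ L := hM.mono _ _ hcontra
    have : M (neg (bigAnd l)) ∈ w := mcs_mp hL hw (mcs_thm hL hw hmono) h
    exact ((mcs_neg hL hw).mp this) hbig
  obtain ⟨u, hsub, hu⟩ := lindenbaum hL hcons
  refine ⟨u, hu, fun δ hδ => hsub (Set.mem_insert_of_mem _ hδ), hsub (Set.mem_insert _ _)⟩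

end Canon

/-- The type of maximal L-consistent sets. -/
def MCSet (L : Set BForm) : Type := {w : Set BForm // IsMCS L w}

/-- Canonical R relation. -/
def Rc (L : Set BForm) (w u : MCSet L) : Prop := ∀ δ, box δ ∈ w.1 → δ ∈ u.1
/-- Canonical D relation. -/
def Dc (L : Set BForm) (w u : MCSet L) : Prop := ∀ δ, dbox δ ∈ w.1 → δ ∈ u.1
/-- Canonical valuation. -/
def canθ (L : Set BForm) : ℕ → MCSet L → Prop := fun p w => var p ∈ w.1

section Canon2
variable {L : Set BForm} (hL : IsNormalBL L)
include hL

lemma dneg_intro (a : BForm) : imp a (neg (neg a)) ∈ L := by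
  apply hL.taut; intro v hb hi; simp only [BForm.neg, hi]; tauto

lemma dneg_elim (a : BForm) : imp (neg (neg a)) a ∈ L := by
  apply hL.taut; intro v hb hi; simp only [BForm.neg, hi]; tauto

lemma contrapose_thm {a b : BForm} (h : imp a b ∈ L) : imp (neg b) (neg a) ∈ L := by
  refine hL.mp _ _ (hL.taut _ ?_) h
  intro v hb hi; simp only [BForm.neg, hi]; tauto

lemma rc_iff {w u : MCSet L} : Rc L w u ↔ ∀ γ, γ ∈ u.1 → dia γ ∈ w.1 := by
  constructor
  · intro h γ hγ
    by_contra hc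
    have h1 : neg (dia γ) ∈ w.1 := by
      by_contra hq
      exact hc ((mcs_neg hL w.2).mpr hq)
    have h2 : imp (neg (dia γ)) (box (neg γ)) ∈ L := by
      have := hL.monoDia _ _ (dneg_elim hL γ)
      exact contrapose_thm hL this
    have h3 : box (neg γ) ∈ w.1 := mcs_mp hL w.2 (mcs_thm hL w.2 h2) h1
    exact ((mcs_neg hL u.2).mp hγ) (h (neg γ) h3)
  · intro h δ hδ
    by_contra hc
    have h1 : neg δ ∈ u.1 := by
      by_contra hc2
      exact hc ((mcs_neg hL u.2).mpr hc2)
    have h2 : dia (neg δ) ∈ w.1 := h (neg δ) h1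
    exact ((mcs_neg hL w.2).mp h2) hδ

lemma dc_iff {w u : MCSet L} : Dc L w u ↔ ∀ γ, γ ∈ u.1 → ddia γ ∈ w.1 := by
  constructor
  · intro h γ hγ
    by_contra hc
    have h1 : neg (ddia γ) ∈ w.1 := by
      by_contra hq
      exact hc ((mcs_neg hL w.2).mpr hq)
    have h2 : imp (neg (ddia γ)) (dbox (neg γ)) ∈ L := by
      have := hL.monoDdia _ _ (dneg_elim hL γ)
      exact contrapose_thm hL this
    have h3 : dbox (neg γ) ∈ w.1 := mcs_mp hL w.2 (mcs_thm hL w.2 h2) h1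
    exact ((mcs_neg hL u.2).mp hγ) (h (neg γ) h3)
  · intro h δ hδ
    by_contra hc
    have h1 : neg δ ∈ u.1 := by
      by_contra hc2
      exact hc ((mcs_neg hL u.2).mpr hc2)
    have h2 : ddia (neg δ) ∈ w.1 := h (neg δ) h1
    exact ((mcs_neg hL w.2).mp h2) hδ

/-- The canonical truth lemma. -/
lemma canonical_truth : ∀ (γ : BForm) (w : MCSet L),
    BSat (Rc L) (Dc L) (canθ L) w γ ↔ γ ∈ w.1 := by
  intro γ
  induction γ with
  | var p => intro w; exact Iff.rfl
  | bot => intro w; exact ⟨fun h => h.elim, fun h => mcs_bot hL w.2 h⟩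
  | imp a b iha ihb =>
    intro w
    rw [show BSat (Rc L) (Dc L) (canθ L) w (imp a b) ↔
      (BSat (Rc L) (Dc L) (canθ L) w a → BSat (Rc L) (Dc L) (canθ L) w b) from Iff.rfl,
      iha, ihb, mcs_imp hL w.2]
  | dia a ih =>
    intro w
    constructor
    · rintro ⟨u, hR, hs⟩
      exact (rc_iff hL).mp hR a ((ih u).mp hs)
    · intro h
      obtain ⟨u, hu, hrel, ha⟩ := modOK_exists hL (modOK_dia hL) w.2 h
      exact ⟨⟨u, hu⟩, fun δ hδ => hrel δ hδ, (ih ⟨u, hu⟩).mpr ha⟩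
  | ddia a ih =>
    intro w
    constructor
    · rintro ⟨u, hR, hs⟩
      exact (dc_iff hL).mp hR a ((ih u).mp hs)
    · intro h
      obtain ⟨u, hu, hrel, ha⟩ := modOK_exists hL (modOK_ddia hL) w.2 h
      exact ⟨⟨u, hu⟩, fun δ hδ => hrel δ hδ, (ih ⟨u, hu⟩).mpr ha⟩

end Canon2
end Stmt6

namespace Stmt6
open BForm

section AxCanon
variable {L : Set BForm} (hL : IsNormalBL L)
include hL

lemma axB1_inst (hB1 : BForm.axB1 ∈ L) (a : BForm) :
    imp a (dbox (ddia a)) ∈ L := by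
  have := hL.subst _ (fun _ => a) hB1
  simpa [BForm.axB1, BForm.dbox, BForm.neg, BForm.subst] using this

lemma axB2_inst (hB2 : BForm.axB2 ∈ L) (a : BForm) :
    imp (ddia (ddia a)) (Ex a) ∈ L := by
  have := hL.subst _ (fun _ => a) hB2
  simpa [BForm.axB2, BForm.Ex, BForm.or, BForm.neg, BForm.subst] using this

lemma axB3_inst (hB3 : BForm.axB3 ∈ L) (a : BForm) :
    imp (dia a) (Ex a) ∈ L := by
  have := hL.subst _ (fun _ => a) hB3
  simpa [BForm.axB3, BForm.Ex, BForm.or, BForm.neg, BForm.subst] using this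

lemma mcs_not_mem {w : Set BForm} (hw : IsMCS L w) {γ : BForm} (h : γ ∉ w) :
    neg γ ∈ w := by
  by_contra hc
  exact h ((mcs_neg hL hw).mpr hc)

lemma mcs_ex_elim {w : Set BForm} (hw : IsMCS L w) {a : BForm} (h : Ex a ∈ w) :
    ddia a ∈ w ∨ a ∈ w := by
  have : or (ddia a) a ∈ w := h
  exact (mcs_or hL hw).mp this

lemma mcset_diff {w v : MCSet L} (h : w ≠ v) : ∃ γ, γ ∈ v.1 ∧ γ ∉ w.1 := by
  by_contra hc
  push_neg at hc
  apply h
  apply Subtype.ext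
  apply Set.Subset.antisymm
  · intro γ hγ
    by_contra hg
    have h1 : neg γ ∈ v.1 := mcs_not_mem hL v.2 hg
    exact ((mcs_neg hL w.2).mp hγ) (hc _ h1)
  · exact fun γ hγ => hc γ hγ

lemma dc_symm (hB1 : BForm.axB1 ∈ L) {w u : MCSet L} (h : Dc L w u) :
    Dc L u w := by
  intro δ hδ
  by_contra hc
  have h1 : neg δ ∈ w.1 := mcs_not_mem hL w.2 hc
  have h2 : dbox (ddia (neg δ)) ∈ w.1 :=
    mcs_mp hL w.2 (mcs_thm hL w.2 (axB1_inst hL hB1 (neg δ))) h1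
  have h3 : ddia (neg δ) ∈ u.1 := h _ h2
  exact ((mcs_neg hL u.2).mp h3) hδ

lemma dc_wtrans (hB2 : BForm.axB2 ∈ L) {w u v : MCSet L}
    (h1 : Dc L w u) (h2 : Dc L u v) : w = v ∨ Dc L w v := by
  by_cases hwv : w = v
  · exact Or.inl hwv
  obtain ⟨γ0, hγ0v, hγ0w⟩ := mcset_diff hL hwv
  refine Or.inr ((dc_iff hL).mpr ?_)
  intro γ hγ
  have hx : and γ γ0 ∈ v.1 := (mcs_and hL v.2).mpr ⟨hγ, hγ0v⟩
  have hd1 : ddia (and γ γ0) ∈ u.1 := (dc_iff hL).mp h2 _ hx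
  have hd2 : ddia (ddia (and γ γ0)) ∈ w.1 := (dc_iff hL).mp h1 _ hd1
  have hex : Ex (and γ γ0) ∈ w.1 :=
    mcs_mp hL w.2 (mcs_thm hL w.2 (axB2_inst hL hB2 _)) hd2
  rcases mcs_ex_elim hL w.2 hex with hd | hm
  · have hmono : imp (ddia (and γ γ0)) (ddia γ) ∈ L := by
      refine hL.monoDdia _ _ (hL.taut _ ?_)
      intro vv hb hi; simp only [BForm.and, BForm.neg, hi]; tauto
    exact mcs_mp hL w.2 (mcs_thm hL w.2 hmono) hd
  · exact absurd ((mcs_and hL w.2).mp hm).2 hγ0w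

lemma rc_sub_dc (hB3 : BForm.axB3 ∈ L) {w u : MCSet L} (h : Rc L w u) :
    w = u ∨ Dc L w u := by
  by_cases hwu : w = u
  · exact Or.inl hwu
  obtain ⟨γ0, hγ0u, hγ0w⟩ := mcset_diff hL hwu
  refine Or.inr ((dc_iff hL).mpr ?_)
  intro γ hγ
  have hx : and γ γ0 ∈ u.1 := (mcs_and hL u.2).mpr ⟨hγ, hγ0u⟩
  have hd1 : dia (and γ γ0) ∈ w.1 := (rc_iff hL).mp h _ hx
  have hex : Ex (and γ γ0) ∈ w.1 :=
    mcs_mp hL w.2 (mcs_thm hL w.2 (axB3_inst hL hB3 _)) hd1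
  rcases mcs_ex_elim hL w.2 hex with hd | hm
  · have hmono : imp (ddia (and γ γ0)) (ddia γ) ∈ L := by
      refine hL.monoDdia _ _ (hL.taut _ ?_)
      intro vv hb hi; simp only [BForm.and, BForm.neg, hi]; tauto
    exact mcs_mp hL w.2 (mcs_thm hL w.2 hmono) hd
  · exact absurd ((mcs_and hL w.2).mp hm).2 hγ0w

/-- The D-generated set around a root. -/
def Wgen (L : Set BForm) (w0 : MCSet L) : Set (MCSet L) :=
  insert w0 {u | Dc L w0 u}

lemma wgen_root {w0 : MCSet L} : w0 ∈ Wgen L w0 := Set.mem_insert _ _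

lemma wgen_dc_closed (hB2 : BForm.axB2 ∈ L) {w0 w u : MCSet L}
    (hw : w ∈ Wgen L w0) (h : Dc L w u) : u ∈ Wgen L w0 := by
  rcases hw with rfl | hw
  · exact Set.mem_insert_of_mem _ h
  · rcases dc_wtrans hL hB2 hw h with rfl | h2
    · exact Set.mem_insert _ _
    · exact Set.mem_insert_of_mem _ h2

lemma wgen_rc_closed (hB2 : BForm.axB2 ∈ L) (hB3 : BForm.axB3 ∈ L)
    {w0 w u : MCSet L} (hw : w ∈ Wgen L w0) (h : Rc L w u) : u ∈ Wgen L w0 := by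
  rcases rc_sub_dc hL hB3 h with rfl | h2
  · exact hw
  · exact wgen_dc_closed hL hB2 hw h2

lemma wgen_pair (hB1 : BForm.axB1 ∈ L) (hB2 : BForm.axB2 ∈ L)
    {w0 w u : MCSet L} (hw : w ∈ Wgen L w0) (hu : u ∈ Wgen L w0)
    (hne : w ≠ u) : Dc L w u := by
  rcases hw with rfl | hw
  · rcases hu with rfl | hu
    · exact absurd rfl hne
    · exact hu
  · rcases hu with rfl | hu
    · exact dc_symm hL hB1 hw
    · rcases dc_wtrans hL hB2 (dc_symm hL hB1 hw) hu with rfl | h2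
      · exact absurd rfl hne
      · exact h2

end AxCanon
end Stmt6

namespace Stmt6
open BForm

attribute [local instance] Classical.propDecidable

lemma mem_sub_self (φ : BForm) : φ ∈ sub φ := by
  cases φ <;> simp [BForm.sub]

lemma subClosed_sub (φ : BForm) : SubClosed (sub φ) := by
  induction φ with
  | var p => intro ψ hψ; simp [BForm.sub] at hψ; subst hψ; simp [BForm.sub]
  | bot => intro ψ hψ; simp [BForm.sub] at hψ; subst hψ; simp [BForm.sub]
  | imp a b iha ihb =>
    intro ψ hψ
    rw [BForm.sub] at hψ
    rcases Finset.mem_insert.mp hψ with rfl | h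
    · exact subset_refl _
    · rcases Finset.mem_union.mp h with h | h
      · refine (iha ψ h).trans ?_
        rw [BForm.sub]
        intro x hx
        exact Finset.mem_insert_of_mem (Finset.mem_union_left _ hx)
      · refine (ihb ψ h).trans ?_
        rw [BForm.sub]
        intro x hx
        exact Finset.mem_insert_of_mem (Finset.mem_union_right _ hx)
  | dia a iha =>
    intro ψ hψ
    rw [BForm.sub] at hψ
    rcases Finset.mem_insert.mp hψ with rfl | h
    · exact subset_refl _
    · refine (iha ψ h).trans ?_
      rw [BForm.sub]
      exact Finset.subset_insert _ _
  | ddia a iha =>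
    intro ψ hψ
    rw [BForm.sub] at hψ
    rcases Finset.mem_insert.mp hψ with rfl | h
    · exact subset_refl _
    · refine (iha ψ h).trans ?_
      rw [BForm.sub]
      exact Finset.subset_insert _ _

lemma sub_imp_left {φ0 a b : BForm} (h : imp a b ∈ sub φ0) : a ∈ sub φ0 := by
  refine subClosed_sub φ0 _ h ?_
  rw [BForm.sub]
  exact Finset.mem_insert_of_mem (Finset.mem_union_left _ (mem_sub_self a))

lemma sub_imp_right {φ0 a b : BForm} (h : imp a b ∈ sub φ0) : b ∈ sub φ0 := by
  refine subClosed_sub φ0 _ h ?_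
  rw [BForm.sub]
  exact Finset.mem_insert_of_mem (Finset.mem_union_right _ (mem_sub_self b))

lemma sub_dia {φ0 a : BForm} (h : dia a ∈ sub φ0) : a ∈ sub φ0 := by
  refine subClosed_sub φ0 _ h ?_
  rw [BForm.sub]
  exact Finset.mem_insert_of_mem (mem_sub_self a)

lemma sub_ddia {φ0 a : BForm} (h : ddia a ∈ sub φ0) : a ∈ sub φ0 := by
  refine subClosed_sub φ0 _ h ?_
  rw [BForm.sub]
  exact Finset.mem_insert_of_mem (mem_sub_self a)

lemma fin2_flip : ∀ i : Fin 2, (if i = 0 then (1 : Fin 2) else 0) ≠ i := by decide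

section Model
variable (L : Set BForm) (φ0 : BForm) (w0 : MCSet L)

/-- Projection of an MCS to an atom over sub φ0. -/
noncomputable def projA (w : MCSet L) : Finset BForm :=
  (sub φ0).filter (fun γ => γ ∈ w.1)

/-- Atoms that must be duplicated. -/
def DupT (T : Finset BForm) : Prop :=
  ∃ w ∈ Wgen L w0, projA L φ0 w = T ∧
    (Dc L w w ∨ ∃ u ∈ Wgen L w0, u ≠ w ∧ projA L φ0 u = T)

/-- The carrier of the filtrated model. -/
def YT : Type :=
  {p : Finset BForm × Fin 2 //
    (∃ w ∈ Wgen L w0, projA L φ0 w = p.1) ∧ (p.2 = 0 ∨ DupT L φ0 w0 p.1)}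

/-- The R relation of the filtrated model. -/
def RY (y z : YT L φ0 w0) : Prop :=
  ∃ w ∈ Wgen L w0, ∃ u ∈ Wgen L w0,
    projA L φ0 w = y.1.1 ∧ projA L φ0 u = z.1.1 ∧ Rc L w u

/-- The valuation of the filtrated model. -/
def θY : ℕ → YT L φ0 w0 → Prop := fun p y => var p ∈ y.1.1

variable {L φ0 w0}

lemma mem_projA {γ : BForm} (hγ : γ ∈ sub φ0) {w : MCSet L} :
    γ ∈ projA L φ0 w ↔ γ ∈ w.1 := by
  simp [projA, hγ]

section TruthY
variable (hL : IsNormalBL L) (hB1 : BForm.axB1 ∈ L) (hB2 : BForm.axB2 ∈ L)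
  (hB3 : BForm.axB3 ∈ L)
include hL hB1 hB2 hB3

lemma y_truth : ∀ γ, γ ∈ sub φ0 → ∀ y : YT L φ0 w0,
    BSat (RY L φ0 w0) (fun a b => a ≠ b) (θY L φ0 w0) y γ ↔ γ ∈ y.1.1 := by
  intro γ
  induction γ with
  | var p => intro _ y; exact Iff.rfl
  | bot =>
    intro hγ y
    obtain ⟨⟨w, hw, hπ⟩, -⟩ := y.2
    constructor
    · intro h; exact h.elim
    · intro h
      rw [← hπ, mem_projA hγ] at h
      exact mcs_bot hL w.2 h
  | imp a b iha ihb =>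
    intro hγ y
    obtain ⟨⟨w, hw, hπ⟩, -⟩ := y.2
    have ha := sub_imp_left hγ
    have hb := sub_imp_right hγ
    have e1 : BSat (RY L φ0 w0) (fun a b => a ≠ b) (θY L φ0 w0) y (imp a b) ↔
        (BSat (RY L φ0 w0) (fun a b => a ≠ b) (θY L φ0 w0) y a →
         BSat (RY L φ0 w0) (fun a b => a ≠ b) (θY L φ0 w0) y b) := Iff.rfl
    rw [e1, iha ha y, ihb hb y, ← hπ, mem_projA ha, mem_projA hb, mem_projA hγ,
      mcs_imp hL w.2]
  | dia a iha =>
    intro hγ y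
    have ha := sub_dia hγ
    constructor
    · rintro ⟨z, hRz, hsat⟩
      obtain ⟨w, hw, u, hu, hπw, hπu, hrc⟩ := hRz
      have hau : a ∈ u.1 := (mem_projA ha).mp (hπu ▸ (iha ha z).mp hsat)
      have : dia a ∈ w.1 := (rc_iff hL).mp hrc a hau
      rw [← hπw]
      exact (mem_projA hγ).mpr this
    · intro h
      obtain ⟨⟨w, hw, hπ⟩, -⟩ := y.2
      have hdw : dia a ∈ w.1 := (mem_projA hγ).mp (hπ ▸ h)
      obtain ⟨u', hu', hrel, hau⟩ := modOK_exists hL (modOK_dia hL) w.2 hdw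
      have hrc : Rc L w ⟨u', hu'⟩ := fun δ hδ => hrel δ hδ
      have huW : (⟨u', hu'⟩ : MCSet L) ∈ Wgen L w0 := wgen_rc_closed hL hB2 hB3 hw hrc
      refine ⟨⟨(projA L φ0 ⟨u', hu'⟩, 0), ⟨⟨u', hu'⟩, huW, rfl⟩, Or.inl rfl⟩,
        ⟨w, hw, ⟨u', hu'⟩, huW, hπ, rfl, hrc⟩, ?_⟩
      exact (iha ha _).mpr ((mem_projA ha).mpr hau)
  | ddia a iha =>
    intro hγ y
    have ha := sub_ddia hγ
    constructor
    · intro h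
      obtain ⟨z, hne, hsat⟩ := h
      have haz : a ∈ z.1.1 := (iha ha z).mp hsat
      obtain ⟨⟨u, hu, hπu⟩, -⟩ := z.2
      show ddia a ∈ y.1.1
      by_cases hST : z.1.1 = y.1.1
      · have hj : z.1.2 ≠ y.1.2 := fun hsnd =>
          hne ((Subtype.ext (Prod.ext hST hsnd)).symm)
        have hdup : DupT L φ0 w0 y.1.1 := by
          rcases y.2.2 with hy0 | hdup
          · rcases z.2.2 with hz0 | hdup
            · exact absurd (hz0.trans hy0.symm) hj
            · exact hST ▸ hdup
          · exact hdup
        obtain ⟨w', hw', hπ', hcase⟩ := hdup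
        rcases hcase with hrefl | ⟨u', hu', hne', hπu'⟩
        · have haw' : a ∈ w'.1 := (mem_projA ha).mp (by rw [hπ']; exact hST ▸ haz)
          exact hπ' ▸ (mem_projA hγ).mpr ((dc_iff hL).mp hrefl a haw')
        · have hau' : a ∈ u'.1 := (mem_projA ha).mp (by rw [hπu']; exact hST ▸ haz)
          have hdc : Dc L w' u' := wgen_pair hL hB1 hB2 hw' hu' (Ne.symm hne')
          exact hπ' ▸ (mem_projA hγ).mpr ((dc_iff hL).mp hdc a hau')
      · obtain ⟨⟨w, hw, hπw⟩, -⟩ := y.2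
        have hwu : w ≠ u := fun hq => hST (by rw [← hπu, ← hπw, hq])
        have hdc : Dc L w u := wgen_pair hL hB1 hB2 hw hu hwu
        have hau : a ∈ u.1 := (mem_projA ha).mp (hπu ▸ haz)
        exact hπw ▸ (mem_projA hγ).mpr ((dc_iff hL).mp hdc a hau)
    · intro h
      obtain ⟨⟨w, hw, hπw⟩, -⟩ := y.2
      have hdw : ddia a ∈ w.1 := (mem_projA hγ).mp (hπw ▸ h)
      obtain ⟨u', hmcs, hrel, hau⟩ := modOK_exists hL (modOK_ddia hL) w.2 hdw
      have hdc : Dc L w ⟨u', hmcs⟩ := fun δ hδ => hrel δ hδ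
      have huW : (⟨u', hmcs⟩ : MCSet L) ∈ Wgen L w0 := wgen_dc_closed hL hB2 hw hdc
      set u : MCSet L := ⟨u', hmcs⟩ with hudef
      by_cases hπeq : projA L φ0 u = y.1.1
      · have hdup : DupT L φ0 w0 y.1.1 := by
          by_cases huw : u = w
          · exact ⟨w, hw, hπw, Or.inl (huw ▸ hdc)⟩
          · exact ⟨w, hw, hπw, Or.inr ⟨u, huW, huw, hπeq⟩⟩
        refine ⟨⟨(y.1.1, if y.1.2 = 0 then 1 else 0), ⟨w, hw, hπw⟩, Or.inr hdup⟩,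
          ?_, ?_⟩
        · intro hq
          exact fin2_flip y.1.2 (congrArg (fun t => t.1.2) hq).symm
        · refine (iha ha _).mpr ?_
          show a ∈ y.1.1
          rw [← hπeq]
          exact (mem_projA ha).mpr hau
      · refine ⟨⟨(projA L φ0 u, 0), ⟨u, huW, rfl⟩, Or.inl rfl⟩, ?_, ?_⟩
        · intro hq
          exact hπeq (congrArg (fun t => t.1.1) hq).symm
        · exact (iha ha _).mpr ((mem_projA ha).mpr hau)

end TruthY
end Model
end Stmt6

namespace Stmt6
open BForm

attribute [local instance] Classical.propDecidable

@[simp] lemma subst_neg (σ : ℕ → BForm) (a : BForm) :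
    subst σ (neg a) = neg (subst σ a) := rfl
@[simp] lemma subst_and (σ : ℕ → BForm) (a b : BForm) :
    subst σ (and a b) = and (subst σ a) (subst σ b) := rfl
@[simp] lemma subst_or (σ : ℕ → BForm) (a b : BForm) :
    subst σ (or a b) = or (subst σ a) (subst σ b) := rfl
@[simp] lemma subst_dbox (σ : ℕ → BForm) (a : BForm) :
    subst σ (dbox a) = dbox (subst σ a) := rfl
@[simp] lemma subst_Ex (σ : ℕ → BForm) (a : BForm) :
    subst σ (Ex a) = Ex (subst σ a) := rfl
@[simp] lemma subst_All (σ : ℕ → BForm) (a : BForm) :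
    subst σ (All a) = All (subst σ a) := rfl
@[simp] lemma subst_imp (σ : ℕ → BForm) (a b : BForm) :
    subst σ (imp a b) = imp (subst σ a) (subst σ b) := rfl
@[simp] lemma subst_dia (σ : ℕ → BForm) (a : BForm) :
    subst σ (dia a) = dia (subst σ a) := rfl
@[simp] lemma subst_ddia (σ : ℕ → BForm) (a : BForm) :
    subst σ (ddia a) = ddia (subst σ a) := rfl
@[simp] lemma subst_var (σ : ℕ → BForm) (p : ℕ) :
    subst σ (var p) = σ p := rfl

@[simp] lemma subst_bigOr (σ : ℕ → BForm) (l : List BForm) :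
    subst σ (bigOr l) = bigOr (l.map (subst σ)) := by
  induction l with
  | nil => rfl
  | cons a l ih => simp only [bigOr, List.map_cons, subst_or, ih]

@[simp] lemma subst_bigAnd (σ : ℕ → BForm) (l : List BForm) :
    subst σ (bigAnd l) = bigAnd (l.map (subst σ)) := by
  induction l with
  | nil => rfl
  | cons a l ih => simp only [bigAnd, List.map_cons, subst_and, ih]

lemma subst_CF (σ : ℕ → BForm) (k : ℕ) :
    subst σ (CF k) =
      imp
        (All (bigOr ((List.range k).map fun i =>
          and (σ i) (bigAnd (((List.range k).filter (fun j => j ≠ i)).map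
            fun j => neg (σ j))))))
        (Ex (bigOr ((List.range k).map fun i => and (σ i) (dia (σ i))))) := by
  simp only [CF, subst_imp, subst_All, subst_Ex, subst_bigOr, List.map_map]
  congr 4
  funext i
  simp only [Function.comp, subst_and, subst_var, subst_bigAnd, List.map_map]
  congr 1

/-- Characteristic formula of an atom. -/
noncomputable def chiF (φ0 : BForm) (T : Finset BForm) : BForm :=
  bigAnd ((sub φ0).toList.map (fun γ => if γ ∈ T then γ else neg γ))

lemma bsat_chiF {L : Set BForm} (hL : IsNormalBL L) {φ0 : BForm}
    {T : Finset BForm} (hT : T ⊆ sub φ0) (w : MCSet L) :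
    BSat (Rc L) (Dc L) (canθ L) w (chiF φ0 T) ↔ projA L φ0 w = T := by
  rw [chiF, bsat_bigAnd]
  constructor
  · intro h
    ext γ
    by_cases hγ : γ ∈ sub φ0
    · have := h _ (List.mem_map.mpr ⟨γ, Finset.mem_toList.mpr hγ, rfl⟩)
      by_cases hγT : γ ∈ T
      · rw [if_pos hγT] at this
        rw [canonical_truth hL] at this
        simp only [hγT, iff_true]
        exact (mem_projA hγ).mpr this
      · rw [if_neg hγT] at this
        rw [bsat_neg, canonical_truth hL] at this
        simp only [hγT, iff_false]
        intro hc
        exact this ((mem_projA hγ).mp hc)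
    · constructor
      · intro hc
        exact absurd (Finset.mem_filter.mp hc).1 hγ
      · intro hc
        exact absurd (hT hc) hγ
  · rintro rfl
    intro c hc
    obtain ⟨γ, hγl, rfl⟩ := List.mem_map.mp hc
    have hγ : γ ∈ sub φ0 := Finset.mem_toList.mp hγl
    by_cases hγT : γ ∈ projA L φ0 w
    · rw [if_pos hγT, canonical_truth hL]
      exact (mem_projA hγ).mp hγT
    · rw [if_neg hγT, bsat_neg, canonical_truth hL]
      intro hc2
      exact hγT ((mem_projA hγ).mpr hc2)

end Stmt6

namespace Stmt6
open BForm

attribute [local instance] Classical.propDecidable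

section Chrom
variable {L : Set BForm} {φ0 : BForm} {w0 : MCSet L}
variable (hL : IsNormalBL L) (hB1 : BForm.axB1 ∈ L) (hB2 : BForm.axB2 ∈ L)
  (hB3 : BForm.axB3 ∈ L)
include hL hB1 hB2 hB3

lemma chromY {k : ℕ} (hCF : CF k ∈ L) : ChromGT (RY L φ0 w0) k := by
  classical
  intro A hcard hprop
  obtain ⟨hne, hdisj, hcover, hproper⟩ := hprop
  -- every point lies in a cell
  have hmemcell : ∀ y : YT L φ0 w0, ∃ a ∈ A, y ∈ a := by
    intro y
    have h1 : y ∈ ⋃₀ (↑A : Set (Set (YT L φ0 w0))) := by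
      rw [hcover]; trivial
    simpa [Set.mem_sUnion] using h1
  have huniq : ∀ (y : YT L φ0 w0) a b, a ∈ A → b ∈ A → y ∈ a → y ∈ b → a = b := by
    intro y a b ha hb hya hyb
    by_contra hab
    have h1 := hdisj a (by simpa using ha) b (by simpa using hb) hab
    have : y ∈ a ∩ b := ⟨hya, hyb⟩
    rw [h1] at this
    exact this
  have hcards : Fintype.card {a // a ∈ A} ≤ Fintype.card (Fin k) := by
    simpa [Fintype.card_coe] using hcard
  obtain ⟨e⟩ := Function.Embedding.nonempty_of_card_le hcards
  -- the canonical point of an MCS in Wgen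
  let pt : ∀ w : MCSet L, w ∈ Wgen L w0 → YT L φ0 w0 := fun w hw =>
    ⟨(projA L φ0 w, 0), ⟨w, hw, rfl⟩, Or.inl rfl⟩
  -- defining formulas for the colors
  let P : Fin k → Finset BForm → Prop := fun p T =>
    ∃ (h1 : ∃ w ∈ Wgen L w0, projA L φ0 w = T) (a : Set (YT L φ0 w0)) (ha : a ∈ A),
      (⟨(T, 0), h1, Or.inl rfl⟩ : YT L φ0 w0) ∈ a ∧ e ⟨a, ha⟩ = p
  let δf : Fin k → BForm := fun p =>
    bigOr ((((sub φ0).powerset.toList).filter (fun T => P p T)).map (chiF φ0))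
  -- semantics of δf at points of Wgen
  have hδ : ∀ (w : MCSet L) (hw : w ∈ Wgen L w0) (p : Fin k),
      BSat (Rc L) (Dc L) (canθ L) w (δf p) ↔
        ∃ (a : Set (YT L φ0 w0)) (ha : a ∈ A), pt w hw ∈ a ∧ e ⟨a, ha⟩ = p := by
    intro w hw p
    rw [show δf p = bigOr ((((sub φ0).powerset.toList).filter (fun T => P p T)).map
      (chiF φ0)) from rfl, bsat_bigOr]
    constructor
    · rintro ⟨c, hc, hsat⟩
      obtain ⟨T, hTl, rfl⟩ := List.mem_map.mp hc
      have hTf := List.mem_filter.mp hTl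
      have hTsub : T ⊆ sub φ0 :=
        Finset.mem_powerset.mp (Finset.mem_toList.mp hTf.1)
      have hproj : projA L φ0 w = T := (bsat_chiF hL hTsub w).mp hsat
      have hP : P p T := by
        have := hTf.2
        simpa using this
      obtain ⟨h1, a, ha, hmem, hep⟩ := hP
      refine ⟨a, ha, ?_, hep⟩
      have : pt w hw = (⟨(T, 0), h1, Or.inl rfl⟩ : YT L φ0 w0) := by
        apply Subtype.ext
        simp [pt, hproj]
      rw [this]
      exact hmem
    · rintro ⟨a, ha, hmem, hep⟩
      set T := projA L φ0 w with hT
      have hTsub : T ⊆ sub φ0 := Finset.filter_subset _ _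
      have h1 : ∃ w' ∈ Wgen L w0, projA L φ0 w' = T := ⟨w, hw, rfl⟩
      have hP : P p T := by
        refine ⟨h1, a, ha, ?_, hep⟩
        have : (⟨(T, 0), h1, Or.inl rfl⟩ : YT L φ0 w0) = pt w hw := by
          apply Subtype.ext
          simp [pt, hT]
        rw [this]
        exact hmem
      refine ⟨chiF φ0 T, List.mem_map.mpr ⟨T, List.mem_filter.mpr
        ⟨Finset.mem_toList.mpr (Finset.mem_powerset.mpr hTsub), by simpa using hP⟩,
        rfl⟩, ?_⟩
      exact (bsat_chiF hL hTsub w).mpr rfl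
  -- the substitution
  let σn : ℕ → BForm := fun n => if h : n < k then δf ⟨n, h⟩ else bot
  have hσCF : subst σn (CF k) ∈ L := hL.subst _ _ hCF
  have hw0sat : BSat (Rc L) (Dc L) (canθ L) w0 (subst σn (CF k)) :=
    (canonical_truth hL _ w0).mpr (mcs_thm hL w0.2 hσCF)
  rw [subst_CF] at hw0sat
  -- prove the antecedent
  have hant : BSat (Rc L) (Dc L) (canθ L) w0
      (All (bigOr ((List.range k).map fun i =>
        and (σn i) (bigAnd (((List.range k).filter (fun j => j ≠ i)).map
          fun j => neg (σn j)))))) := by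
    rw [bsat_All]
    intro u hu
    have huW : u ∈ Wgen L w0 := by
      rcases hu with h | h
      · exact Set.mem_insert_of_mem _ h
      · exact h ▸ wgen_root hL
    obtain ⟨a0, ha0, hmem0⟩ := hmemcell (pt u huW)
    set p0 : Fin k := e ⟨a0, ha0⟩ with hp0
    rw [bsat_bigOr]
    refine ⟨_, List.mem_map.mpr ⟨(p0 : ℕ), List.mem_range.mpr p0.2, rfl⟩, ?_⟩
    rw [bsat_and]
    constructor
    · have : σn (p0 : ℕ) = δf p0 := by
        simp only [σn, dif_pos p0.2, Fin.eta]
      rw [this, hδ u huW p0]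
      exact ⟨a0, ha0, hmem0, rfl⟩
    · rw [bsat_bigAnd]
      intro c hc
      obtain ⟨j, hjf, rfl⟩ := List.mem_map.mp hc
      have hjr := List.mem_filter.mp hjf
      have hjk : j < k := List.mem_range.mp hjr.1
      have hji : j ≠ (p0 : ℕ) := by simpa using hjr.2
      rw [bsat_neg]
      intro hcon
      have : σn j = δf ⟨j, hjk⟩ := by simp only [σn, dif_pos hjk]
      rw [this, hδ u huW ⟨j, hjk⟩] at hcon
      obtain ⟨a, ha, hmem, hep⟩ := hcon
      have haa0 : a = a0 := huniq (pt u huW) a a0 ha ha0 hmem hmem0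
      apply hji
      have : e ⟨a, ha⟩ = p0 := by rw [hp0]; congr 1; exact Subtype.ext haa0
      rw [this] at hep
      exact (congrArg Fin.val hep).symm ▸ rfl
  -- use the consequent
  have hcon := hw0sat hant
  rw [bsat_Ex] at hcon
  obtain ⟨u, hu, hsat⟩ := hcon
  have huW : u ∈ Wgen L w0 := by
    rcases hu with h | h
    · exact Set.mem_insert_of_mem _ h
    · exact h ▸ wgen_root hL
  rw [bsat_bigOr] at hsat
  obtain ⟨c, hc, hsat⟩ := hsat
  obtain ⟨i, hir, rfl⟩ := List.mem_map.mp hc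
  have hik : i < k := List.mem_range.mp hir
  rw [bsat_and] at hsat
  obtain ⟨hs1, hs2⟩ := hsat
  have hσi : σn i = δf ⟨i, hik⟩ := by simp only [σn, dif_pos hik]
  rw [hσi, hδ u huW ⟨i, hik⟩] at hs1
  obtain ⟨a, ha, hmemu, hepu⟩ := hs1
  rw [hσi] at hs2
  obtain ⟨v, hrc, hsatv⟩ := hs2
  have hvW : v ∈ Wgen L w0 := wgen_rc_closed hL hB2 hB3 huW hrc
  rw [hδ v hvW ⟨i, hik⟩] at hsatv
  obtain ⟨a', ha', hmemv, hepv⟩ := hsatv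
  have haa' : a = a' := by
    have : (⟨a, ha⟩ : {x // x ∈ A}) = ⟨a', ha'⟩ := e.injective (hepu.trans hepv.symm)
    exact congrArg Subtype.val this
  subst haa'
  have hedge : RY L φ0 w0 (pt u huW) (pt v hvW) := ⟨u, huW, v, hvW, rfl, rfl, hrc⟩
  exact hproper a (by simpa using ha) (pt u huW) hmemu (pt v hvW) hmemv hedge

end Chrom
end Stmt6

namespace Stmt6
open BForm

lemma stmt6_main (k : ℕ) (φ : BForm) :
    φ ∈ NormalLogicOf (KDiffAx ∪ {BForm.CF k}) ↔
      ∀ (X : Type) (_ : Nonempty X) (R : X → X → Prop),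
        ChromGT R k → BValid R (fun x y : X => x ≠ y) φ := by
  constructor
  · intro h X hX R hch
    exact soundness k h X hX R hch
  · intro h
    by_contra hφ
    set L : Set BForm := NormalLogicOf (KDiffAx ∪ {BForm.CF k}) with hLdef
    have hL : IsNormalBL L := normalLogicOf_normal _
    have hB1 : BForm.axB1 ∈ L :=
      subset_normalLogicOf _ (Set.mem_union_left _ (by simp [KDiffAx]))
    have hB2 : BForm.axB2 ∈ L :=
      subset_normalLogicOf _ (Set.mem_union_left _ (by simp [KDiffAx]))
    have hB3 : BForm.axB3 ∈ L :=
      subset_normalLogicOf _ (Set.mem_union_left _ (by simp [KDiffAx]))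
    have hCF : BForm.CF k ∈ L := subset_normalLogicOf _ (Set.mem_union_right _ rfl)
    have hcons : ConsistentS L {neg φ} := by
      rintro ⟨l, hl, hp⟩
      have h1 : imp (neg φ) (bigAnd l) ∈ L := by
        refine imp_bigAnd hL ?_
        intro δ hδ
        rw [Set.mem_singleton_iff.mp (hl δ hδ)]
        apply hL.taut
        intro v hb hi; simp only [hi]; tauto
      have h2 : imp (neg φ) bot ∈ L := imp_trans hL h1 hp
      refine hφ (hL.mp _ _ (hL.taut (imp (imp (neg φ) bot) φ) ?_) h2)
      intro v hb hi; simp only [BForm.neg, hi]; tauto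
    obtain ⟨w1, hsub1, hw1⟩ := lindenbaum hL hcons
    set w0 : MCSet L := ⟨w1, hw1⟩ with hw0def
    have hφw0 : φ ∉ w0.1 :=
      fun hc => (mcs_neg hL hw1).mp hc (hsub1 (Set.mem_singleton _))
    have hNEY : Nonempty (YT L φ w0) :=
      ⟨⟨(projA L φ w0, 0), ⟨w0, wgen_root hL, rfl⟩, Or.inl rfl⟩⟩
    have hch : ChromGT (RY L φ w0) k := chromY hL hB1 hB2 hB3 hCF
    have hvalid := h (YT L φ w0) hNEY (RY L φ w0) hch
    have hsat := hvalid (θY L φ w0)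
      ⟨(projA L φ w0, 0), ⟨w0, wgen_root hL, rfl⟩, Or.inl rfl⟩
    replace hsat := (y_truth hL hB1 hB2 hB3 (w0 := w0) φ (mem_sub_self φ) _).mp hsat
    exact hφw0 ((mem_projA (mem_sub_self φ)).mp hsat)

end Stmt6


/-- φ ∈ K_≠ + CF_k iff φ is valid in every frame (X,R,≠_X) with X
nonempty and C(X,R) > k. -/
theorem stmt6 (k : ℕ) (φ : BForm) :
    φ ∈ NormalLogicOf (KDiffAx ∪ {BForm.CF k}) ↔
      ∀ (X : Type) (_ : Nonempty X) (R : X → X → Prop),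
        ChromGT R k → BValid R (fun x y : X => x ≠ y) φ := by
  exact Stmt6.stmt6_main k φ
end

section
/- Let F=(X,R,D) be a bimodal frame such that R is symmetric and ≠_X ⊆ D, where ≠_X is the inequality relation on X. Then (X,R) is connected if and only if the formula Con is valid in F. -/
namespace Stmt8Aux

variable {X : Type} {R D : X → X → Prop} {θ : ℕ → X → Prop}

lemma satNeg (x : X) (a : BForm) :
    BSat R D θ x (BForm.neg a) ↔ ¬ BSat R D θ x a := by
  simp [BForm.neg, BSat]

lemma satAnd (x : X) (a b : BForm) :
    BSat R D θ x (BForm.and a b) ↔ BSat R D θ x a ∧ BSat R D θ x b := by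
  simp only [BForm.and, BForm.neg, BSat]
  tauto

lemma satEx (hD : ∀ x y : X, x ≠ y → D x y) (x : X) (a : BForm) :
    BSat R D θ x (BForm.Ex a) ↔ ∃ y, BSat R D θ y a := by
  simp only [BForm.Ex, BForm.or, BForm.neg, BSat]
  constructor
  · intro h
    by_cases hc : ∃ y, D x y ∧ BSat R D θ y a
    · obtain ⟨y, _, hy⟩ := hc; exact ⟨y, hy⟩
    · exact ⟨x, h fun h' => hc h'⟩
  · rintro ⟨y, hy⟩ h
    by_cases hxy : y = x
    · exact hxy ▸ hy
    · exact (h ⟨y, hD x y (Ne.symm hxy), hy⟩).elim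

lemma crossing (P : X → Prop) : ∀ (n : ℕ) (f : ℕ → X), P (f 0) → ¬ P (f n) →
    ∃ i < n, P (f i) ∧ ¬ P (f (i + 1)) := by
  intro n
  induction n with
  | zero => intro f h0 hn; exact absurd h0 hn
  | succ n ih =>
    intro f h0 hn
    by_cases hc : P (f n)
    · exact ⟨n, Nat.lt_succ_self n, hc, hn⟩
    · obtain ⟨i, hi, h⟩ := ih f h0 hc
      exact ⟨i, hi.trans (Nat.lt_succ_self n), h⟩

lemma satVar (x : X) (p : ℕ) : BSat R D θ x (.var p) ↔ θ p x := Iff.rfl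

lemma satDia (x : X) (a : BForm) :
    BSat R D θ x (.dia a) ↔ ∃ y, R x y ∧ BSat R D θ y a := Iff.rfl

lemma satImp (x : X) (a b : BForm) :
    BSat R D θ x (.imp a b) ↔ (BSat R D θ x a → BSat R D θ x b) := Iff.rfl

lemma satCon (hD : ∀ x y : X, x ≠ y → D x y) (x : X) :
    BSat R D θ x BForm.Con ↔
      (((∃ y, θ 0 y) ∧ (∃ y, ¬ θ 0 y)) → ∃ y, θ 0 y ∧ ∃ z, R y z ∧ ¬ θ 0 z) := by
  show BSat R D θ x
      (.imp (BForm.and (BForm.Ex (.var 0)) (BForm.Ex (BForm.neg (.var 0))))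
        (BForm.Ex (BForm.and (.var 0) (.dia (BForm.neg (.var 0)))))) ↔ _
  rw [satImp, satAnd, satEx hD, satEx hD, satEx hD]
  simp only [satVar, satNeg, satAnd, satDia]

end Stmt8Aux

/-- If R is symmetric and ≠_X ⊆ D, then (X,R) is connected iff the
formula Con is valid in (X,R,D). -/
theorem stmt8 {X : Type} [Nonempty X] (R D : X → X → Prop)
    (hsymm : ∀ x y, R x y → R y x) (hD : ∀ x y : X, x ≠ y → D x y) :
    IsConnectedRel R ↔ BValid R D BForm.Con := by
  constructor
  · intro hconn θ x
    rw [Stmt8Aux.satCon hD]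
    rintro ⟨⟨a, ha⟩, ⟨b, hb⟩⟩
    obtain ⟨n, f, h0, hn, hedge⟩ := hconn a b
    obtain ⟨i, hi, hPi, hPi1⟩ := Stmt8Aux.crossing (θ 0) n f (h0 ▸ ha) (hn ▸ hb)
    rcases hedge i hi with h | h
    · exact ⟨f i, hPi, f (i + 1), h, hPi1⟩
    · exact ⟨f i, hPi, f (i + 1), hsymm _ _ h, hPi1⟩
  · intro hval x y
    set Reach : X → Prop := fun z => ∃ (n : ℕ) (f : ℕ → X), f 0 = x ∧ f n = z ∧
      ∀ i < n, R (f i) (f (i + 1)) ∨ R (f (i + 1)) (f i) with hReach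
    have hx : Reach x := ⟨0, fun _ => x, rfl, rfl, fun i hi => absurd hi (Nat.not_lt_zero i)⟩
    by_contra hy
    have hc := hval (fun _ => Reach) x
    rw [Stmt8Aux.satCon hD] at hc
    obtain ⟨z, hz, w, hzw, hw⟩ := hc ⟨⟨x, hx⟩, ⟨y, hy⟩⟩
    apply hw
    obtain ⟨n, f, h0, hn, he⟩ := hz
    refine ⟨n + 1, fun i => if i ≤ n then f i else w, by simp [h0], by simp, ?_⟩
    intro i hi
    by_cases hin : i < n
    · simpa [Nat.le_of_lt hin, Nat.succ_le_of_lt hin] using he i hin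
    · have hieq : i = n := Nat.le_antisymm (Nat.lt_succ_iff.mp hi) (Nat.le_of_not_lt hin)
      subst hieq
      simpa [hn] using Or.inl (hn ▸ hzw)
end

section
/- Let G be a simple graph with nonempty vertex set V. Then G is connected if and only if the bimodal frame (V, Adj_G, ≠_V) validates the formula Con, where Adj_G is the adjacency relation of G and ≠_V is the inequality relation on V. -/
section Aux
variable {V : Type} (R : V → V → Prop) (θ : ℕ → V → Prop)

lemma aux_sat_and (x : V) (φ ψ : BForm) :
    BSat R (fun a b : V => a ≠ b) θ x (φ.and ψ) ↔
    BSat R (fun a b : V => a ≠ b) θ x φ ∧ BSat R (fun a b : V => a ≠ b) θ x ψ := by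
  simp only [BForm.and, BForm.neg, BSat]
  tauto

lemma aux_sat_Ex (x : V) (φ : BForm) :
    BSat R (fun a b : V => a ≠ b) θ x (BForm.Ex φ) ↔
    ∃ y, BSat R (fun a b : V => a ≠ b) θ y φ := by
  simp only [BForm.Ex, BForm.or, BForm.neg, BSat]
  constructor
  · intro h
    by_cases hc : ∃ y, x ≠ y ∧ BSat R (fun a b : V => a ≠ b) θ y φ
    · obtain ⟨y, _, hy⟩ := hc; exact ⟨y, hy⟩
    · exact ⟨x, h fun hex => hc hex⟩
  · rintro ⟨y, hy⟩ hn
    by_cases hxy : x = y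
    · exact hxy ▸ hy
    · exact absurd ⟨y, hxy, hy⟩ hn

lemma aux_cross {V : Type} (G : SimpleGraph V) (P : V → Prop) :
    ∀ {u v : V}, G.Walk u v → P u → ¬ P v →
      ∃ a b, G.Adj a b ∧ P a ∧ ¬ P b := by
  intro u v w
  induction w with
  | nil => intro h h'; exact absurd h h'
  | @cons u b v h w ih =>
      intro hu hv
      by_cases hb : P b
      · exact ih hb hv
      · exact ⟨u, b, h, hu, hb⟩

end Aux

/-- A simple graph G with nonempty vertex set V is connected iff the
frame (V, Adj_G, ≠_V) validates Con. -/
theorem stmt9 {V : Type} [Nonempty V] (G : SimpleGraph V) :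
    G.Connected ↔ BValid G.Adj (fun x y : V => x ≠ y) BForm.Con := by
  constructor
  · intro hG θ x
    intro hpre
    rw [aux_sat_and] at hpre
    obtain ⟨hEp, hEnp⟩ := hpre
    rw [aux_sat_Ex] at hEp
    rw [aux_sat_Ex] at hEnp
    obtain ⟨u, hu⟩ := hEp
    obtain ⟨v, hv⟩ := hEnp
    have hu' : θ 0 u := hu
    have hv' : ¬ θ 0 v := hv
    obtain ⟨w⟩ := hG.preconnected u v
    obtain ⟨a, b, hab, ha, hb⟩ := aux_cross G (θ 0) w hu' hv'
    rw [aux_sat_Ex]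
    refine ⟨a, ?_⟩
    rw [aux_sat_and]
    exact ⟨ha, ⟨b, hab, fun h => hb h⟩⟩
  · intro hval
    rw [SimpleGraph.connected_iff]
    refine ⟨fun u v => ?_, ‹_›⟩
    by_contra hv
    have h : BSat G.Adj (fun x y : V => x ≠ y) (fun _ z => G.Reachable u z) u BForm.Con :=
      hval (fun _ z => G.Reachable u z) u
    have hc := h (by
      rw [aux_sat_and]
      constructor
      · rw [aux_sat_Ex]; exact ⟨u, SimpleGraph.Reachable.refl u⟩
      · rw [aux_sat_Ex]; exact ⟨v, fun hr => hv hr⟩)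
    rw [aux_sat_Ex] at hc
    obtain ⟨w, hw⟩ := hc
    rw [aux_sat_and] at hw
    obtain ⟨hwp, z, haz, hz⟩ := hw
    exact hz ((hwp : G.Reachable u w).trans haz.reachable)
end
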